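/- arXiv:1505.06912 — 4 statements merged into one kernel-verified Lean document; each statement's English description precedes it below -/
import Mathlib

section
/- Let μ be a probability distribution on [0,∞). Suppose for every c > 0 there exists a probability distribution ρ_c with support contained in [0,c] such that ρ_c * μ is locally subexponential. Then μ is locally subexponential. -/
open MeasureTheory Filter Set

noncomputable def conv (f g : ℝ → ℝ) (x : ℝ) : ℝ := ∫ u, f (x - u) * g u

def IsDensity (f : ℝ → ℝ) : Prop := (∀ x, 0 ≤ f x) ∧ (∫ x, f x) = 1

def LongTailedFun (f : ℝ → ℝ) : Prop :=
  (∀ᶠ x in atTop, 0 < f x) ∧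
  ∀ a : ℝ, Tendsto (fun x => f (x + a) / f x) atTop (nhds 1)

def LongDensity (f : ℝ → ℝ) : Prop := IsDensity f ∧ LongTailedFun f

def SubexpDensity (f : ℝ → ℝ) : Prop :=
  LongDensity f ∧ Tendsto (fun x => conv f f x / f x) atTop (nhds 2)

noncomputable def mconv (μ ν : Measure ℝ) : Measure ℝ :=
  (μ.prod ν).map (fun p : ℝ × ℝ => p.1 + p.2)

noncomputable def locMass (μ : Measure ℝ) (c x : ℝ) : ℝ := (μ (Ioc x (x + c))).toReal

def MemLDelta (μ : Measure ℝ) (c : ℝ) : Prop :=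
  (∀ᶠ x in atTop, 0 < locMass μ c x) ∧
  ∀ a : ℝ, Tendsto (fun x => locMass μ c (x + a) / locMass μ c x) atTop (nhds 1)

def MemSDelta (μ : Measure ℝ) (c : ℝ) : Prop :=
  MemLDelta μ c ∧
  Tendsto (fun x => locMass (mconv μ μ) c x / locMass μ c x) atTop (nhds 2)

def LLoc (μ : Measure ℝ) : Prop := ∀ c > 0, MemLDelta μ c
def SLoc (μ : Measure ℝ) : Prop := ∀ c > 0, MemSDelta μ c

def LAc (μ : Measure ℝ) : Prop :=
  ∃ g : ℝ → ℝ, LongDensity g ∧ μ = volume.withDensity (fun x => ENNReal.ofReal (g x))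
def SAc (μ : Measure ℝ) : Prop :=
  ∃ g : ℝ → ℝ, SubexpDensity g ∧ μ = volume.withDensity (fun x => ENNReal.ofReal (g x))

open Topology

/-!
Write `ν = ρ ∗ μ` with `ρ` a probability supported in `[0, δ]`. Convolving with `ρ` moves mass to
the right by at most `δ`, so a `μ`-window of length `c` is squeezed between `ν`-windows of lengths
`c - δ` and `c + δ`; likewise a `μ ∗ μ`-window lies between windows of
`ν ∗ ν = (ρ ∗ ρ) ∗ (μ ∗ μ)` of lengths `c ∓ 2δ`. Long-tailedness of `ν` at `δ` makes the mass of a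
`ν`-window of length `kδ` asymptotically `k` times that of a window of length `δ`. With
`δ = c / (n + 3)` the ratios defining `μ ∈ S_loc` are thus eventually trapped between bounds
tending to `(n + 2) / (n + 4)` and `(n + 4) / (n + 2)` (resp. `2 (n + 1) / (n + 4)` and
`2 (n + 5) / (n + 2)`), and `n → ∞` concludes.
-/

lemma tendsto_of_forall_exists_bounds {α ι β : Type*} [TopologicalSpace β] [LinearOrder β]
    [OrderTopology β] {l : Filter α} {p : Filter ι} [p.NeBot] {f : α → β} {a b : ι → β} {t : β}
    (ha : Tendsto a p (𝓝 t)) (hb : Tendsto b p (𝓝 t))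
    (h : ∀ n, ∃ lo hi : α → β, Tendsto lo l (𝓝 (a n)) ∧ Tendsto hi l (𝓝 (b n)) ∧
      ∀ᶠ x in l, lo x ≤ f x ∧ f x ≤ hi x) :
    Tendsto f l (𝓝 t) := by
  rw [tendsto_order]
  constructor
  · intro t' ht'
    obtain ⟨n, hn⟩ := (ha.eventually (lt_mem_nhds ht')).exists
    obtain ⟨lo, _, hlo, -, hle⟩ := h n
    filter_upwards [hlo.eventually (lt_mem_nhds hn), hle] with x h₁ h₂ using h₁.trans_le h₂.1
  · intro t' ht'
    obtain ⟨n, hn⟩ := (hb.eventually (gt_mem_nhds ht')).exists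
    obtain ⟨_, hi, -, hhi, hle⟩ := h n
    filter_upwards [hhi.eventually (gt_mem_nhds hn), hle] with x h₁ h₂ using h₂.2.trans_lt h₁

lemma Filter.Tendsto.div_mul_div_cancel₀ {α : Type*} {l : Filter α} {f g k : α → ℝ} {s r : ℝ}
    (hf : Tendsto (fun x => f x / g x) l (𝓝 s)) (hg : Tendsto (fun x => g x / k x) l (𝓝 r))
    (hg₀ : ∀ᶠ x in l, g x ≠ 0) :
    Tendsto (fun x => f x / k x) l (𝓝 (s * r)) :=
  (hf.mul hg).congr' (hg₀.mono fun _ hx => _root_.div_mul_div_cancel₀ hx)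

lemma exists_bounds_div_of_le {α : Type*} {l : Filter α} {f g fin fout gin gout : α → ℝ} {s r : ℝ}
    (hf : ∀ x, fin x ≤ f x ∧ f x ≤ fout x) (hg : ∀ x, gin x ≤ g x ∧ g x ≤ gout x)
    (hf₀ : ∀ x, 0 ≤ f x) (hgin : ∀ᶠ x in l, 0 < gin x)
    (hlo : Tendsto (fun x => fin x / gout x) l (𝓝 s))
    (hhi : Tendsto (fun x => fout x / gin x) l (𝓝 r)) :
    ∃ lo hi : α → ℝ, Tendsto lo l (𝓝 s) ∧ Tendsto hi l (𝓝 r) ∧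
      ∀ᶠ x in l, lo x ≤ f x / g x ∧ f x / g x ≤ hi x :=
  ⟨_, _, hlo, hhi, hgin.mono fun x hx =>
    ⟨div_le_div₀ (hf₀ x) (hf x).1 (hx.trans_le (hg x).1) (hg x).2,
      div_le_div₀ ((hf₀ x).trans (hf x).2) (hf x).2 hx (hg x).1⟩⟩

lemma tendsto_natCast_add_div_natCast_add (p q : ℝ) :
    Tendsto (fun n : ℕ => ((n : ℝ) + p) / (n + q)) atTop (𝓝 1) := by
  have hp : Tendsto (fun n : ℕ => p / ((n : ℝ) + q)) atTop (𝓝 0) :=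
    tendsto_const_nhds.div_atTop (tendsto_atTop_add_const_right _ q tendsto_natCast_atTop_atTop)
  simpa only [add_div, add_zero] using (tendsto_natCast_div_add_atTop q).add hp

lemma mconv_eq_conv (μ ν : Measure ℝ) : mconv μ ν = μ ∗ ν := rfl

instance (μ ν : Measure ℝ) [IsProbabilityMeasure μ] [IsProbabilityMeasure ν] :
    IsProbabilityMeasure (mconv μ ν) :=
  inferInstanceAs (IsProbabilityMeasure (μ ∗ ν))

lemma mconv_mconv_mconv_comm (ρ μ ρ' μ' : Measure ℝ) [SFinite ρ] [SFinite μ] [SFinite ρ']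
    [SFinite μ'] : mconv (mconv ρ μ) (mconv ρ' μ') = mconv (mconv ρ ρ') (mconv μ μ') := by
  simp only [mconv_eq_conv]
  rw [Measure.conv_assoc, ← Measure.conv_assoc μ, Measure.conv_comm μ ρ', Measure.conv_assoc,
    Measure.conv_assoc]

lemma mconv_apply (ρ μ : Measure ℝ) [SFinite μ] {s : Set ℝ} (hs : MeasurableSet s) :
    mconv ρ μ s = ∫⁻ u, μ {v | u + v ∈ s} ∂ρ := by
  rw [mconv, Measure.map_apply measurable_add hs, Measure.prod_apply (hs.preimage measurable_add)]
  rfl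

lemma ae_mem_Icc_mconv {ρ μ : Measure ℝ} [SFinite ρ] [SFinite μ] {h h' : ℝ}
    (hρ : ∀ᵐ u ∂ρ, u ∈ Icc 0 h) (hμ : ∀ᵐ v ∂μ, v ∈ Icc 0 h') :
    ∀ᵐ w ∂(mconv ρ μ), w ∈ Icc 0 (h + h') := by
  refine (ae_map_iff measurable_add.aemeasurable (p := (· ∈ Icc 0 (h + h'))) measurableSet_Icc).2 ?_
  filter_upwards [Measure.quasiMeasurePreserving_fst.ae hρ,
    Measure.quasiMeasurePreserving_snd.ae hμ] with p hp₁ hp₂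
  exact ⟨add_nonneg hp₁.1 hp₂.1, add_le_add hp₁.2 hp₂.2⟩

lemma locMass_nonneg (μ : Measure ℝ) (c x : ℝ) : 0 ≤ locMass μ c x := ENNReal.toReal_nonneg

lemma locMass_add (μ : Measure ℝ) [IsFiniteMeasure μ] {a b : ℝ} (ha : 0 ≤ a) (hb : 0 ≤ b)
    (x : ℝ) : locMass μ (a + b) x = locMass μ a x + locMass μ b (x + a) := by
  rw [locMass, locMass, locMass, ← ENNReal.toReal_add (measure_ne_top _ _) (measure_ne_top _ _),
    ← measure_union (Ioc_disjoint_Ioc_of_le le_rfl) measurableSet_Ioc, ← add_assoc,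
    Ioc_union_Ioc_eq_Ioc (by linarith) (by linarith)]

lemma locMass_mconv_sandwich {ρ μ : Measure ℝ} [IsProbabilityMeasure ρ] [IsProbabilityMeasure μ]
    {h : ℝ} (hρ : ∀ᵐ u ∂ρ, u ∈ Icc 0 h) {b c b' : ℝ} (hb : b + h = c) (hb' : c + h = b') (x : ℝ) :
    locMass (mconv ρ μ) b (x + h) ≤ locMass μ c x ∧ locMass μ c x ≤ locMass (mconv ρ μ) b' x := by
  constructor <;> refine ENNReal.toReal_mono (measure_ne_top _ _) ?_ <;>
    rw [mconv_apply _ _ measurableSet_Ioc]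
  · calc (∫⁻ u, μ {v | u + v ∈ Ioc (x + h) (x + h + b)} ∂ρ) ≤ ∫⁻ _, μ (Ioc x (x + c)) ∂ρ :=
          lintegral_mono_ae <| hρ.mono fun u hu => measure_mono fun v (hv : u + v ∈ Ioc _ _) =>
            ⟨by linarith [hv.1, hu.2], by linarith [hv.2, hu.1]⟩
      _ = μ (Ioc x (x + c)) := by simp
  · calc μ (Ioc x (x + c)) = ∫⁻ _, μ (Ioc x (x + c)) ∂ρ := by simp
      _ ≤ ∫⁻ u, μ {v | u + v ∈ Ioc x (x + b')} ∂ρ :=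
          lintegral_mono_ae <| hρ.mono fun u hu => measure_mono fun v hv =>
            ⟨by linarith [hv.1, hu.1], by linarith [hv.2, hu.2]⟩

namespace MemLDelta

lemma pos {ν : Measure ℝ} {δ : ℝ} (hν : MemLDelta ν δ) : 0 < δ := by
  obtain ⟨x, hx⟩ := hν.1.exists
  by_contra! hδ
  simp [locMass, Ioc_eq_empty (by linarith : ¬ x < x + δ)] at hx

variable {ν : Measure ℝ} [IsFiniteMeasure ν] {δ : ℝ}

lemma tendsto_locMass_natMul_div (hν : MemLDelta ν δ) (k : ℕ) (a : ℝ) :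
    Tendsto (fun x => locMass ν (k * δ) (x + a) / locMass ν δ x) atTop (𝓝 k) := by
  induction k with
  | zero => simp [locMass]
  | succ k ih =>
    have hsplit : ∀ x, locMass ν ((k + 1) * δ) (x + a)
        = locMass ν (k * δ) (x + a) + locMass ν δ (x + (a + k * δ)) := fun x => by
      rw [add_one_mul, locMass_add ν (mul_nonneg k.cast_nonneg hν.pos.le) hν.pos.le, add_assoc]
    simpa only [Nat.cast_succ, hsplit, add_div] using ih.add (hν.2 (a + k * δ))

lemma tendsto_locMass_div (hν : MemLDelta ν δ) (k : ℕ) {j : ℕ} (hj : j ≠ 0) (a b : ℝ) :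
    Tendsto (fun x => locMass ν (k * δ) (x + a) / locMass ν (j * δ) (x + b)) atTop
      (𝓝 (k / j)) := by
  refine ((hν.tendsto_locMass_natMul_div k a).div (hν.tendsto_locMass_natMul_div j b)
    (Nat.cast_ne_zero.2 hj)).congr' ?_
  filter_upwards [hν.1] with x hx
  exact div_div_div_cancel_right₀ hx.ne' _ _

lemma eventually_locMass_pos (hν : MemLDelta ν δ) {k : ℕ} (hk : k ≠ 0) (a : ℝ) :
    ∀ᶠ x in atTop, 0 < locMass ν (k * δ) (x + a) := by
  have hk' : (0 : ℝ) < k := by positivity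
  filter_upwards [(hν.tendsto_locMass_natMul_div k a).eventually (lt_mem_nhds hk')] with x hx
  refine (locMass_nonneg _ _ _).lt_of_ne fun h0 => ?_
  simp [← h0] at hx

end MemLDelta

section Bounds

variable {μ ρ : Measure ℝ} [IsProbabilityMeasure μ] [IsProbabilityMeasure ρ] {δ c : ℝ} {n : ℕ}

lemma locMass_mconv_sandwich_of_eq_mul (hρ : ∀ᵐ u ∂ρ, u ∈ Icc 0 δ) (hc : c = (n + 3) * δ)
    (x : ℝ) :
    locMass (mconv ρ μ) ((n + 2) * δ) (x + δ) ≤ locMass μ c x ∧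
      locMass μ c x ≤ locMass (mconv ρ μ) ((n + 4) * δ) x :=
  locMass_mconv_sandwich hρ (by rw [hc]; ring) (by rw [hc]; ring) x

lemma eventually_locMass_pos_of_mconv (hρ : ∀ᵐ u ∂ρ, u ∈ Icc 0 δ) (hν : MemLDelta (mconv ρ μ) δ)
    (hc : c = (n + 3) * δ) : ∀ᶠ x in atTop, 0 < locMass μ c x := by
  have hpos := hν.eventually_locMass_pos (k := n + 2) (by omega) δ
  push_cast at hpos
  exact hpos.mono fun x hx => hx.trans_le (locMass_mconv_sandwich_of_eq_mul hρ hc x).1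

lemma exists_bounds_locMass_add_div (hρ : ∀ᵐ u ∂ρ, u ∈ Icc 0 δ) (hν : MemLDelta (mconv ρ μ) δ)
    (hc : c = (n + 3) * δ) (a : ℝ) :
    ∃ lo hi : ℝ → ℝ, Tendsto lo atTop (𝓝 ((n + 2) / (n + 4))) ∧
      Tendsto hi atTop (𝓝 ((n + 4) / (n + 2))) ∧ ∀ᶠ x in atTop,
        lo x ≤ locMass μ c (x + a) / locMass μ c x ∧
          locMass μ c (x + a) / locMass μ c x ≤ hi x := by
  have hpos := hν.eventually_locMass_pos (k := n + 2) (by omega) δ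
  have hlo := hν.tendsto_locMass_div (n + 2) (j := n + 4) (by omega) (a + δ) 0
  have hhi := hν.tendsto_locMass_div (n + 4) (j := n + 2) (by omega) a δ
  push_cast at hpos hlo hhi
  simp only [add_zero, ← add_assoc] at hlo
  have hsand := locMass_mconv_sandwich_of_eq_mul (μ := μ) hρ hc
  exact exists_bounds_div_of_le (fun x => hsand (x + a)) hsand (fun _ => locMass_nonneg _ _ _)
    hpos hlo hhi

lemma exists_bounds_locMass_mconv_self_div (hδ : 0 < δ) (hρ : ∀ᵐ u ∂ρ, u ∈ Icc 0 δ)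
    (hν : SLoc (mconv ρ μ)) (hc : c = (n + 3) * δ) :
    ∃ lo hi : ℝ → ℝ, Tendsto lo atTop (𝓝 (2 * ((n + 1) / (n + 4)))) ∧
      Tendsto hi atTop (𝓝 (2 * ((n + 5) / (n + 2)))) ∧ ∀ᶠ x in atTop,
        lo x ≤ locMass (mconv μ μ) c x / locMass μ c x ∧
          locMass (mconv μ μ) c x / locMass μ c x ≤ hi x := by
  set ν := mconv ρ μ
  have hL : MemLDelta ν δ := (hν δ hδ).1
  have hsand₂ : ∀ x, locMass (mconv ν ν) ((n + 1) * δ) (x + (δ + δ)) ≤ locMass (mconv μ μ) c x ∧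
      locMass (mconv μ μ) c x ≤ locMass (mconv ν ν) ((n + 5) * δ) x := by
    rw [mconv_mconv_mconv_comm ρ μ ρ μ]
    exact locMass_mconv_sandwich (ae_mem_Icc_mconv hρ hρ) (by rw [hc]; ring) (by rw [hc]; ring)
  have hS : ∀ k : ℕ, k ≠ 0 → ∀ a, Tendsto (fun x =>
      locMass (mconv ν ν) (k * δ) (x + a) / locMass ν (k * δ) (x + a)) atTop (𝓝 2) :=
    fun k hk a => (hν _ (by positivity)).2.comp (tendsto_atTop_add_const_right _ a tendsto_id)
  have hlo := (hS (n + 1) (by omega) (δ + δ)).div_mul_div_cancel₀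
    (hL.tendsto_locMass_div (n + 1) (j := n + 4) (by omega) (δ + δ) 0)
    ((hL.eventually_locMass_pos (k := n + 1) (by omega) (δ + δ)).mono fun _ hx => hx.ne')
  have hhi := (hS (n + 5) (by omega) 0).div_mul_div_cancel₀
    (hL.tendsto_locMass_div (n + 5) (j := n + 2) (by omega) 0 δ)
    ((hL.eventually_locMass_pos (k := n + 5) (by omega) 0).mono fun _ hx => hx.ne')
  have hpos := hL.eventually_locMass_pos (k := n + 2) (by omega) δ
  push_cast at hpos hlo hhi
  simp only [add_zero] at hlo hhi
  exact exists_bounds_div_of_le hsand₂ (locMass_mconv_sandwich_of_eq_mul hρ hc)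
    (fun _ => locMass_nonneg _ _ _) hpos hlo hhi

end Bounds

theorem stmt3_general (μ : Measure ℝ) [IsProbabilityMeasure μ]
    (h : ∀ c > (0:ℝ), ∃ ρ : Measure ℝ, IsProbabilityMeasure ρ ∧
      ρ ((Icc (0:ℝ) c)ᶜ) = 0 ∧ SLoc (mconv ρ μ)) :
    SLoc μ := by
  intro c hc
  have hδ : ∀ n : ℕ, 0 < c / (n + 3) := fun n => by positivity
  have hcδ : ∀ n : ℕ, c = (n + 3) * (c / (n + 3)) := fun n => by field_simp
  choose ρ hρ hρ₀ hν using fun n : ℕ => h _ (hδ n)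
  have hsupp : ∀ n : ℕ, ∀ᵐ u ∂(ρ n), u ∈ Icc 0 (c / (n + 3)) := fun n => mem_ae_iff.2 (hρ₀ n)
  have hlim : ∀ p q : ℝ, Tendsto (fun n : ℕ => ((n : ℝ) + p) / (n + q)) atTop (𝓝 1) :=
    tendsto_natCast_add_div_natCast_add
  refine ⟨⟨eventually_locMass_pos_of_mconv (hsupp 0) (hν 0 _ (hδ 0)).1 (hcδ 0), fun a => ?_⟩, ?_⟩
  · exact tendsto_of_forall_exists_bounds (hlim 2 4) (hlim 4 2) fun n =>
      exists_bounds_locMass_add_div (hsupp n) (hν n _ (hδ n)).1 (hcδ n) a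
  · simpa only [mul_one] using tendsto_of_forall_exists_bounds ((hlim 1 4).const_mul 2)
      ((hlim 5 2).const_mul 2)
      fun n => exists_bounds_locMass_mconv_self_div (hδ n) (hsupp n) (hν n) (hcδ n)

theorem stmt3 (μ : Measure ℝ) [IsProbabilityMeasure μ] (hsupp : μ (Iio 0) = 0)
    (h : ∀ c > (0:ℝ), ∃ ρ : Measure ℝ, IsProbabilityMeasure ρ ∧
      ρ ((Icc (0:ℝ) c)ᶜ) = 0 ∧ SLoc (mconv ρ μ)) :
    SLoc μ :=
  stmt3_general μ h
end

section
/- The class S_d of subexponential densities on ℝ is not closed under asymptotic equivalence: there exist probability densities p₁ ∈ S_d and p₂ ∉ S_d on ℝ with p₂(x) ∼ c·p₁(x) as x → ∞ for some constant c > 0. -/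
open MeasureTheory Filter Set

open Real Topology ProbabilityTheory

/-!
Let `f x = exp (-L (log x))` for `x ≥ 1`, where `L t = (3 + sin √t) t` oscillates between `2 t`
and `4 t`. Since `|L s - L t| ≤ (4 + √(max s t)) |s - t|`, the ratio `f y / f x` tends to `1`
uniformly in `|y - x| = o(√x)` and stays below `exp (4 + √(log x + 1))` for `|y - x| ≤ x / 2`.
Splitting `f ⊗ f x` at `h x = exp (2 √(log x + 1))` and `x - h x` then gives
`f ⊗ f x ∼ 2 (∫ f) f x`, so the normalisation `p₁` of `f` is subexponential.

For `p₂` take half of `p₁` plus half of the Pareto(1/2) density reflected to `(-∞, -1]`, so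
`p₂ = p₁ / 2` on `[0, ∞)`. At a trough `x = exp θ²` of `f` (`sin θ = 1`, `f x = exp (-4 θ²)`)
the convolution `p₂ ⊗ p₂ x` sees the next peak `y = exp (θ + π)²` (`f y = exp (-2 (θ + π)²)`)
paired with the Pareto tail at `x - y`, of size `y ^ (-3/2)`; as `4 θ² - 7/2 (θ + π)² → ∞`, this
exceeds `3 p₂ x`.
-/

lemma abs_sub_le_sub_one_mul_of_le_mul {a b C : ℝ} (ha : 0 ≤ a) (hC : 0 < C) (hba : b ≤ C * a)
    (hab : a ≤ C * b) : |b - a| ≤ (C - 1) * a := by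
  rw [abs_le]
  constructor
  · nlinarith [mul_nonneg (sq_nonneg (C - 1)) ha]
  · linarith

lemma log_sub_log_le_div {x y : ℝ} (hx : 0 < x) (hy : 0 < y) : log y - log x ≤ (y - x) / x := by
  rw [← log_div hy.ne' hx.ne', sub_div, div_self hx.ne']
  exact log_le_sub_one_of_pos (div_pos hy hx)

lemma abs_log_sub_log_le {x y : ℝ} (hx : 0 < x) (hy : x / 2 ≤ y) :
    |log y - log x| ≤ 2 * |y - x| / x := by
  have hy0 : 0 < y := by linarith
  rw [abs_le]
  constructor
  · have hdiv : (x - y) / y ≤ 2 * |y - x| / x := by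
      rw [div_le_div_iff₀ hy0 hx]
      nlinarith [neg_abs_le (y - x), le_abs_self (y - x)]
    linarith [log_sub_log_le_div hy0 hx]
  · have hdiv : (y - x) / x ≤ 2 * |y - x| / x := by
      gcongr
      linarith [le_abs_self (y - x), abs_nonneg (y - x)]
    linarith [log_sub_log_le_div hx hy0]

lemma tendsto_sqrt_log_add_one : Tendsto (fun x => √(log x + 1)) atTop atTop :=
  tendsto_sqrt_atTop.comp (tendsto_atTop_add_const_right _ 1 tendsto_log_atTop)

lemma tendsto_exp_two_mul_sqrt_log_div_sqrt :
    Tendsto (fun x => exp (2 * √(log x + 1)) / √x) atTop (𝓝 0) := by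
  have hbot : Tendsto (fun x => 17 / 4 - log x / 4) atTop atBot := by
    simpa [sub_eq_add_neg] using tendsto_atBot_add_const_left _ (17 / 4)
      (tendsto_neg_atTop_atBot.comp
        (tendsto_log_atTop.atTop_div_const (by norm_num : (0 : ℝ) < 4)))
  refine squeeze_zero' (Eventually.of_forall fun x => by positivity) ?_
    (tendsto_exp_atBot.comp hbot)
  filter_upwards [eventually_ge_atTop 1] with x hx
  have hσ := sq_sqrt (by linarith [log_nonneg hx] : 0 ≤ log x + 1)
  have hsqrt : √x = exp (log x / 2) := by
    rw [exp_half, exp_log (by linarith)]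
  rw [hsqrt, ← exp_sub, Function.comp_apply, exp_le_exp]
  -- `2 σ ≤ σ² / 4 + 4` for `σ = √(log x + 1)`
  nlinarith [sq_nonneg (√(log x + 1) / 2 - 2)]

lemma conv_const_mul (c : ℝ) (f : ℝ → ℝ) (x : ℝ) :
    conv (fun y => c * f y) (fun y => c * f y) x = c ^ 2 * conv f f x := by
  simp only [conv, ← integral_const_mul]
  congr 1 with u
  ring

lemma integrable_conv_integrand {f : ℝ → ℝ} {M : ℝ} (hf : Integrable f) (hM : ∀ x, |f x| ≤ M)
    (x : ℝ) : Integrable fun u => f (x - u) * f u :=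
  hf.bdd_mul (hf.comp_sub_left x).aestronglyMeasurable (ae_of_all _ fun u => hM (x - u))

lemma conv_eq_intervalIntegral {f : ℝ → ℝ} (hf : ∀ x < 0, f x = 0) {x : ℝ} (hx : 0 ≤ x) :
    conv f f x = ∫ u in 0..x, f (x - u) * f u := by
  rw [intervalIntegral.integral_of_le hx, ← integral_Icc_eq_integral_Ioc, conv,
    setIntegral_eq_integral_of_forall_compl_eq_zero]
  intro u hu
  rcases not_and_or.1 hu with hu | hu
  · simp [hf u (not_le.1 hu)]
  · simp [hf (x - u) (by linarith [not_le.1 hu])]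

lemma conv_eq_two_mul_add {f : ℝ → ℝ} (hf : ∀ x < 0, f x = 0) {x a : ℝ} (ha : 0 ≤ a)
    (hax : 2 * a ≤ x) (hint : Integrable fun u => f (x - u) * f u) :
    conv f f x = 2 * (∫ u in 0..a, f (x - u) * f u) + ∫ u in a..x - a, f (x - u) * f u := by
  have hsymm : ∫ u in x - a..x, f (x - u) * f u = ∫ u in 0..a, f (x - u) * f u := by
    simpa [mul_comm] using
      (intervalIntegral.integral_comp_sub_left (fun u => f (x - u) * f u) x (a := 0) (b := a)).symm
  rw [conv_eq_intervalIntegral hf (by linarith),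
    ← intervalIntegral.integral_add_adjacent_intervals (b := a) hint.intervalIntegrable
      hint.intervalIntegrable,
    ← intervalIntegral.integral_add_adjacent_intervals (a := a) (b := x - a)
      hint.intervalIntegrable hint.intervalIntegrable, hsymm]
  ring

lemma abs_integral_conv_sub_le {f : ℝ → ℝ} (hf_nonneg : ∀ x, 0 ≤ f x) (hf : Integrable f)
    {x a c : ℝ} (ha : 0 ≤ a) (hint : Integrable fun u => f (x - u) * f u)
    (hnear : ∀ u ∈ Icc 0 a, |f (x - u) - f x| ≤ c) :
    |(∫ u in 0..a, f (x - u) * f u) - f x * ∫ u in 0..a, f u| ≤ c * ∫ u in 0..a, f u := by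
  rw [← intervalIntegral.integral_const_mul, ← intervalIntegral.integral_sub
    hint.intervalIntegrable (hf.const_mul _).intervalIntegrable,
    ← intervalIntegral.integral_const_mul]
  refine (intervalIntegral.abs_integral_le_integral_abs ha).trans
    (intervalIntegral.integral_mono_on ha (hint.sub (hf.const_mul _)).abs.intervalIntegrable
      (hf.const_mul c).intervalIntegrable fun u hu => ?_)
  rw [← sub_mul, abs_mul, abs_of_nonneg (hf_nonneg u)]
  exact mul_le_mul_of_nonneg_right (hnear u hu) (hf_nonneg u)

theorem tendsto_conv_div_of_split {f h ε δ : ℝ → ℝ} (hf_nonneg : ∀ x, 0 ≤ f x)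
    (hf_neg : ∀ x < 0, f x = 0) (hf : Integrable f)
    (hint : ∀ x, Integrable fun u => f (x - u) * f u) (hh : Tendsto h atTop atTop)
    (hε : Tendsto ε atTop (𝓝 0)) (hδ : Tendsto δ atTop (𝓝 0)) (hpos : ∀ᶠ x in atTop, 0 < f x)
    (hhx : ∀ᶠ x in atTop, 2 * h x ≤ x)
    (hnear : ∀ᶠ x in atTop, ∀ u ∈ Icc 0 (h x), |f (x - u) - f x| ≤ ε x * f x)
    (hmid : ∀ᶠ x in atTop, ∫ u in h x..x - h x, f (x - u) * f u ≤ δ x * f x) :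
    Tendsto (fun x => conv f f x / f x) atTop (𝓝 (2 * ∫ x, f x)) := by
  have hhead : Tendsto (fun x => ∫ u in 0..h x, f u) atTop (𝓝 (∫ x, f x)) := by
    have := intervalIntegral_tendsto_integral_Ioi 0 hf.integrableOn hh
    rwa [← integral_Ici_eq_integral_Ioi,
      setIntegral_eq_integral_of_forall_compl_eq_zero (s := Ici 0)
        fun u hu => hf_neg u (not_le.1 hu)] at this
  have hbound : Tendsto (fun x => 2 * ε x * (∫ x, f x) + δ x) atTop (𝓝 0) := by
    simpa using ((hε.const_mul 2).mul_const (∫ x, f x)).add hδ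
  have hclose : ∀ᶠ x in atTop,
      |conv f f x / f x - 2 * ∫ u in 0..h x, f u| ≤ 2 * ε x * (∫ x, f x) + δ x := by
    filter_upwards [hpos, hhx, hnear, hmid, hh.eventually_ge_atTop 0] with x hfx hx hnear hmid hh0
    have hε0 : 0 ≤ ε x := nonneg_of_mul_nonneg_left
      (by simpa using hnear 0 (left_mem_Icc.2 hh0)) hfx
    have hhead_le : ∫ u in 0..h x, f u ≤ ∫ x, f x := by
      rw [intervalIntegral.integral_of_le hh0]
      exact setIntegral_le_integral hf (ae_of_all _ hf_nonneg)
    have hmid0 : 0 ≤ ∫ u in h x..x - h x, f (x - u) * f u :=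
      intervalIntegral.integral_nonneg (by linarith) fun u _ =>
        mul_nonneg (hf_nonneg _) (hf_nonneg u)
    have hnear' := abs_le.1 (abs_integral_conv_sub_le hf_nonneg hf hh0 (hint x) hnear)
    rw [conv_eq_two_mul_add hf_neg hh0 hx (hint x), abs_le]
    constructor
    · rw [le_sub_iff_add_le, le_div_iff₀ hfx]
      linarith [mul_le_mul_of_nonneg_left hhead_le (mul_nonneg hε0 hfx.le)]
    · rw [sub_le_iff_le_add, div_le_iff₀ hfx]
      linarith [mul_le_mul_of_nonneg_left hhead_le (mul_nonneg hε0 hfx.le)]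
  have := ((tendsto_zero_iff_abs_tendsto_zero _).2
    (squeeze_zero' (Eventually.of_forall fun _ => abs_nonneg _) hclose hbound)).add
    (hhead.const_mul 2)
  simpa using this

lemma LongTailedFun.const_mul {f : ℝ → ℝ} (hf : LongTailedFun f) {c : ℝ} (hc : 0 < c) :
    LongTailedFun fun x => c * f x := by
  refine ⟨hf.1.mono fun x hx => mul_pos hc hx, fun a => ?_⟩
  simpa only [mul_div_mul_left _ _ hc.ne'] using hf.2 a

lemma subexpDensity_normalize {f : ℝ → ℝ} (hf_nonneg : ∀ x, 0 ≤ f x) (hI : 0 < ∫ x, f x)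
    (hf : LongTailedFun f) (hconv : Tendsto (fun x => conv f f x / f x) atTop (𝓝 (2 * ∫ x, f x))) :
    SubexpDensity fun x => (∫ y, f y)⁻¹ * f x := by
  have hc : 0 < (∫ y, f y)⁻¹ := inv_pos.2 hI
  refine ⟨⟨⟨fun x => mul_nonneg hc.le (hf_nonneg x), ?_⟩, hf.const_mul hc⟩, ?_⟩
  · rw [integral_const_mul, inv_mul_cancel₀ hI.ne']
  · have hratio : ∀ x, conv (fun y => (∫ y, f y)⁻¹ * f y) (fun y => (∫ y, f y)⁻¹ * f y) x /
        ((∫ y, f y)⁻¹ * f x) = (∫ y, f y)⁻¹ * (conv f f x / f x) := fun x => by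
      rw [conv_const_mul, pow_two, mul_assoc, mul_div_mul_left _ _ hc.ne', mul_div_assoc]
    simp only [hratio]
    convert hconv.const_mul (∫ y, f y)⁻¹ using 2
    field_simp

lemma mul_le_conv {p : ℝ → ℝ} {x c a b : ℝ} (hp : ∀ u, 0 ≤ p u)
    (hint : Integrable fun u => p (x - u) * p u) (hb : 0 ≤ b)
    (hpa : ∀ u ∈ Ioc c (c + 1), a ≤ p (x - u)) (hpb : ∀ u ∈ Ioc c (c + 1), b ≤ p u) :
    a * b ≤ conv p p x := calc
  a * b = (a * b) * volume.real (Ioc c (c + 1)) := by simp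
  _ ≤ ∫ u in Ioc c (c + 1), p (x - u) * p u :=
    setIntegral_ge_of_const_le_real measurableSet_Ioc (by simp)
      (fun u hu => mul_le_mul (hpa u hu) (hpb u hu) hb (hp _)) hint.integrableOn
  _ ≤ conv p p x := setIntegral_le_integral hint (ae_of_all _ fun u => mul_nonneg (hp _) (hp _))

lemma not_subexpDensity_of_le_conv_div {p : ℝ → ℝ} {x : ℕ → ℝ} {c : ℝ} (hc : 2 < c)
    (hx : Tendsto x atTop atTop) (hle : ∀ᶠ k in atTop, c ≤ conv p p (x k) / p (x k)) :
    ¬ SubexpDensity p := fun hp => by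
  obtain ⟨k, hlt, hge⟩ := ((hx.eventually (hp.2.eventually (gt_mem_nhds hc))).and hle).exists
  exact hlt.not_ge hge

noncomputable def oscRate (t : ℝ) : ℝ := (3 + sin √t) * t

noncomputable def oscTail (x : ℝ) : ℝ := if 1 ≤ x then exp (-oscRate (log x)) else 0

lemma two_mul_le_oscRate {t : ℝ} (ht : 0 ≤ t) : 2 * t ≤ oscRate t := by
  have := neg_one_le_sin √t
  unfold oscRate
  nlinarith

lemma oscRate_sq {θ : ℝ} (hθ : 0 ≤ θ) : oscRate (θ ^ 2) = (3 + sin θ) * θ ^ 2 := by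
  rw [oscRate, sqrt_sq hθ]

lemma abs_oscRate_sub_le {s t : ℝ} (hs : 0 ≤ s) (ht : 0 ≤ t) :
    |oscRate s - oscRate t| ≤ (4 + √(max s t)) * |s - t| := by
  wlog hts : t ≤ s generalizing s t
  · simpa only [abs_sub_comm, max_comm] using this ht hs (le_of_not_ge hts)
  obtain ⟨a, ha, rfl⟩ : ∃ a, 0 ≤ a ∧ a ^ 2 = s := ⟨√s, sqrt_nonneg s, sq_sqrt hs⟩
  obtain ⟨b, hb, rfl⟩ : ∃ b, 0 ≤ b ∧ b ^ 2 = t := ⟨√t, sqrt_nonneg t, sq_sqrt ht⟩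
  have hba : b ≤ a := by nlinarith
  rw [max_eq_left hts, abs_of_nonneg (sub_nonneg.2 hts), oscRate_sq ha, oscRate_sq hb, sqrt_sq ha]
  have hsin := abs_le.1 ((abs_sin_sub_sin_le a b).trans_eq (abs_of_nonneg (sub_nonneg.2 hba)))
  have hsa := abs_le.1 (abs_sin_le_one a)
  have hsq : 0 ≤ a ^ 2 - b ^ 2 := sub_nonneg.2 hts
  have hcross : b ^ 2 * (a - b) ≤ a * (a ^ 2 - b ^ 2) := by
    nlinarith [mul_nonneg (sub_nonneg.2 hba) hsq, mul_nonneg (mul_nonneg (sub_nonneg.2 hba) ha) hb]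
  have hsplit : (3 + sin a) * a ^ 2 - (3 + sin b) * b ^ 2
      = (3 + sin a) * (a ^ 2 - b ^ 2) + b ^ 2 * (sin a - sin b) := by ring
  rw [hsplit, abs_le]
  constructor <;> nlinarith [mul_le_mul_of_nonneg_left hsin.1 (sq_nonneg b),
    mul_le_mul_of_nonneg_left hsin.2 (sq_nonneg b), mul_le_mul_of_nonneg_right hsa.1 hsq,
    mul_le_mul_of_nonneg_right hsa.2 hsq]

lemma oscTail_of_one_le {x : ℝ} (hx : 1 ≤ x) : oscTail x = exp (-oscRate (log x)) := if_pos hx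

lemma oscTail_of_lt_one {x : ℝ} (hx : x < 1) : oscTail x = 0 := if_neg (not_le.2 hx)

lemma oscTail_nonneg (x : ℝ) : 0 ≤ oscTail x := by
  unfold oscTail; split_ifs <;> positivity

lemma oscTail_pos {x : ℝ} (hx : 1 ≤ x) : 0 < oscTail x := by
  rw [oscTail_of_one_le hx]; positivity

lemma oscTail_le_rpow {x : ℝ} (hx : 1 ≤ x) : oscTail x ≤ x ^ (-2 : ℝ) := by
  rw [oscTail_of_one_le hx, rpow_def_of_pos (by linarith)]
  have := two_mul_le_oscRate (log_nonneg hx)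
  gcongr
  linarith

lemma oscTail_le_one (x : ℝ) : oscTail x ≤ 1 := by
  rcases lt_or_ge x 1 with hx | hx
  · rw [oscTail_of_lt_one hx]; exact zero_le_one
  · exact (oscTail_le_rpow hx).trans (rpow_le_one_of_one_le_of_nonpos hx (by norm_num))

lemma measurable_oscTail : Measurable oscTail := by
  unfold oscTail oscRate
  exact Measurable.ite measurableSet_Ici (by fun_prop) measurable_const

lemma integrable_oscTail : Integrable oscTail := by
  have hIci : IntegrableOn oscTail (Ici 1) := by
    refine (integrableOn_Ici_iff_integrableOn_Ioi (by simp)).2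
      ((integrableOn_Ioi_rpow_of_lt (by norm_num : (-2 : ℝ) < -1) one_pos).mono'
        measurable_oscTail.aestronglyMeasurable
        ((ae_restrict_iff' measurableSet_Ioi).2 (ae_of_all _ fun x hx => ?_)))
    rw [norm_of_nonneg (oscTail_nonneg x)]
    exact oscTail_le_rpow hx.le
  exact integrableOn_univ.1 (hIci.of_forall_sdiff_eq_zero MeasurableSet.univ
    fun x hx => oscTail_of_lt_one (not_le.1 hx.2))

lemma integrable_conv_oscTail (x : ℝ) : Integrable fun u => oscTail (x - u) * oscTail u :=
  integrable_conv_integrand integrable_oscTail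
    (fun y => (abs_of_nonneg (oscTail_nonneg y)).trans_le (oscTail_le_one y)) x

lemma setIntegral_Ioi_oscTail_le {A : ℝ} (hA : 1 ≤ A) : ∫ u in Ioi A, oscTail u ≤ A⁻¹ := by
  have hA0 : 0 < A := by linarith
  calc ∫ u in Ioi A, oscTail u ≤ ∫ u in Ioi A, u ^ (-2 : ℝ) :=
        setIntegral_mono_on integrable_oscTail.integrableOn
          (integrableOn_Ioi_rpow_of_lt (by norm_num) hA0) measurableSet_Ioi
          fun u hu => oscTail_le_rpow (hA.trans hu.le)
    _ = A⁻¹ := by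
      rw [integral_Ioi_rpow_of_lt (by norm_num) hA0]
      norm_num [rpow_neg_one]

lemma integral_oscTail_pos : 0 < ∫ x, oscTail x := by
  rw [integral_pos_iff_support_of_nonneg oscTail_nonneg integrable_oscTail]
  refine lt_of_lt_of_le ?_ (measure_mono (s := Ici 1) fun x hx => (oscTail_pos hx).ne')
  simp

lemma oscTail_le_exp_mul {x y : ℝ} (hx : 1 ≤ x) (hy : 1 ≤ y) :
    oscTail y ≤ exp ((4 + √(max (log x) (log y))) * |log y - log x|) * oscTail x := by
  rw [oscTail_of_one_le hx, oscTail_of_one_le hy, ← exp_add, exp_le_exp, abs_sub_comm]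
  linarith [(abs_le.1 (abs_oscRate_sub_le (log_nonneg hx) (log_nonneg hy))).2]

lemma abs_oscTail_sub_le {x y : ℝ} (hx : 2 ≤ x) (hy : |y - x| ≤ x / 2) :
    |oscTail y - oscTail x| ≤ (exp (2 * (4 + √(log x + 1)) * |y - x| / x) - 1) * oscTail x := by
  obtain ⟨hlow, hupp⟩ := abs_le.1 hy
  have hx0 : 0 < x := by linarith
  have hy0 : 0 < y := by linarith
  have hmax : max (log x) (log y) ≤ log x + 1 := by
    refine max_le (by linarith) ?_
    have := log_le_log hy0 (show y ≤ 2 * x by linarith)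
    rw [log_mul two_ne_zero hx0.ne'] at this
    linarith [log_two_lt_d9]
  have hlog := abs_log_sub_log_le hx0 (by linarith : x / 2 ≤ y)
  have hδ : (4 + √(max (log x) (log y))) * |log y - log x|
      ≤ 2 * (4 + √(log x + 1)) * |y - x| / x :=
    calc _ ≤ (4 + √(log x + 1)) * (2 * |y - x| / x) :=
          mul_le_mul (by gcongr) hlog (abs_nonneg _) (by positivity)
      _ = _ := by ring
  have hyx := oscTail_le_exp_mul (show 1 ≤ y by linarith) (show 1 ≤ x by linarith)
  rw [max_comm, abs_sub_comm] at hyx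
  exact abs_sub_le_sub_one_mul_of_le_mul (oscTail_nonneg x) (exp_pos _)
    ((oscTail_le_exp_mul (by linarith) (by linarith)).trans
      (mul_le_mul_of_nonneg_right (exp_le_exp.2 hδ) (oscTail_nonneg x)))
    (hyx.trans (mul_le_mul_of_nonneg_right (exp_le_exp.2 hδ) (oscTail_nonneg y)))

lemma abs_oscTail_sub_le_of_sqrt {x y : ℝ} (hx : 2 ≤ x) (hy : |y - x| ≤ x / 2) :
    |oscTail y - oscTail x| ≤ (exp (10 * |y - x| / √x) - 1) * oscTail x := by
  refine (abs_oscTail_sub_le hx hy).trans (mul_le_mul_of_nonneg_right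
    (sub_le_sub_right (exp_le_exp.2 ?_) 1) (oscTail_nonneg x))
  have hx0 : 0 < x := by linarith
  have hs1 : 1 ≤ √x := one_le_sqrt.2 (by linarith)
  have hsx : √x * √x = x := mul_self_sqrt hx0.le
  have hσ : √(log x + 1) ≤ √x := sqrt_le_sqrt (by linarith [log_le_sub_one_of_pos hx0])
  rw [div_le_div_iff₀ hx0 (by positivity)]
  nlinarith [abs_nonneg (y - x), mul_le_mul_of_nonneg_left hσ (abs_nonneg (y - x)),
    mul_nonneg (abs_nonneg (y - x)) (sub_nonneg.2 hs1)]

lemma oscTail_le_exp_mul_of_near {x y : ℝ} (hx : 2 ≤ x) (hy : |y - x| ≤ x / 2) :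
    oscTail y ≤ exp (4 + √(log x + 1)) * oscTail x := by
  have h := (abs_le.1 (abs_oscTail_sub_le hx hy)).2
  have hη : 2 * (4 + √(log x + 1)) * |y - x| / x ≤ 4 + √(log x + 1) := by
    rw [div_le_iff₀ (by linarith)]
    nlinarith [sqrt_nonneg (log x + 1)]
  nlinarith [exp_le_exp.2 hη, oscTail_nonneg x]

lemma longTailedFun_oscTail : LongTailedFun oscTail := by
  refine ⟨(eventually_ge_atTop 1).mono fun x hx => oscTail_pos hx, fun a => ?_⟩
  have hlim : Tendsto (fun x => exp (10 * |a| / √x) - 1) atTop (𝓝 0) := by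
    simpa using ((continuous_exp.tendsto 0).comp
      (tendsto_const_nhds.div_atTop tendsto_sqrt_atTop)).sub_const 1
  rw [tendsto_iff_norm_sub_tendsto_zero]
  refine squeeze_zero' (Eventually.of_forall fun _ => norm_nonneg _) ?_ hlim
  filter_upwards [eventually_ge_atTop (max 2 (2 * |a|))] with x hx
  have hx2 : 2 ≤ x := (le_max_left _ _).trans hx
  have hfx := oscTail_pos (by linarith : 1 ≤ x)
  rw [norm_eq_abs, div_sub_one hfx.ne', abs_div, abs_of_pos hfx, div_le_iff₀ hfx]
  have ha : |x + a - x| ≤ x / 2 := by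
    rw [add_sub_cancel_left]
    linarith [le_max_right 2 (2 * |a|)]
  simpa using abs_oscTail_sub_le_of_sqrt hx2 ha

lemma oscTail_sub_mul_le {x u : ℝ} (hx : 2 ≤ x) (hu0 : 0 ≤ u) (hux : u ≤ x) :
    oscTail (x - u) * oscTail u
      ≤ exp (4 + √(log x + 1)) * oscTail x * (oscTail u + oscTail (x - u)) := by
  have hCx : 0 ≤ exp (4 + √(log x + 1)) * oscTail x := mul_nonneg (exp_pos _).le (oscTail_nonneg x)
  have hu := oscTail_nonneg u
  have hxu := oscTail_nonneg (x - u)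
  rcases le_total u (x / 2) with hu2 | hu2
  · have := oscTail_le_exp_mul_of_near (y := x - u) hx
      (by rwa [sub_sub_cancel_left, abs_neg, abs_of_nonneg hu0])
    nlinarith [mul_nonneg hCx hxu]
  · have := oscTail_le_exp_mul_of_near (y := u) hx
      (by rw [abs_sub_comm, abs_of_nonneg (by linarith)]; linarith)
    nlinarith [mul_nonneg hCx hu]

lemma integral_oscTail_conv_mid_le {x A : ℝ} (hx : 2 ≤ x) (hA : 1 ≤ A) (hAx : 2 * A ≤ x) :
    ∫ u in A..x - A, oscTail (x - u) * oscTail u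
      ≤ 2 * exp (4 + √(log x + 1)) / A * oscTail x := by
  set C := exp (4 + √(log x + 1))
  have hAx' : A ≤ x - A := by linarith
  have hpt : ∀ u ∈ Icc A (x - A),
      oscTail (x - u) * oscTail u ≤ C * oscTail x * (oscTail u + oscTail (x - u)) :=
    fun u hu => oscTail_sub_mul_le hx (by linarith [hu.1]) (by linarith [hu.2])
  have hsymm : ∫ u in A..x - A, oscTail (x - u) = ∫ u in A..x - A, oscTail u := by
    simp [intervalIntegral.integral_comp_sub_left oscTail x (a := A) (b := x - A)]
  have htail : ∫ u in A..x - A, oscTail u ≤ A⁻¹ := by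
    rw [intervalIntegral.integral_of_le hAx']
    exact (setIntegral_mono_set integrable_oscTail.integrableOn (ae_of_all _ oscTail_nonneg)
      Ioc_subset_Ioi_self.eventuallyLE).trans (setIntegral_Ioi_oscTail_le hA)
  calc ∫ u in A..x - A, oscTail (x - u) * oscTail u
      ≤ ∫ u in A..x - A, C * oscTail x * (oscTail u + oscTail (x - u)) :=
        intervalIntegral.integral_mono_on hAx' (integrable_conv_oscTail x).intervalIntegrable
          (((integrable_oscTail.add (integrable_oscTail.comp_sub_left x)).const_mul
            _).intervalIntegrable) hpt
    _ = C * oscTail x * (2 * ∫ u in A..x - A, oscTail u) := by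
        rw [intervalIntegral.integral_const_mul, intervalIntegral.integral_add
          integrable_oscTail.intervalIntegrable
          (integrable_oscTail.comp_sub_left x).intervalIntegrable, hsymm, two_mul]
    _ ≤ C * oscTail x * (2 * A⁻¹) := by
        have := oscTail_nonneg x
        gcongr
    _ = 2 * C / A * oscTail x := by ring

lemma tendsto_conv_oscTail_div :
    Tendsto (fun x => conv oscTail oscTail x / oscTail x) atTop (𝓝 (2 * ∫ x, oscTail x)) := by
  set h : ℝ → ℝ := fun x => exp (2 * √(log x + 1))
  have hh : Tendsto h atTop atTop :=
    tendsto_exp_atTop.comp (tendsto_sqrt_log_add_one.const_mul_atTop two_pos)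
  have hh_sqrt : Tendsto (fun x => h x / √x) atTop (𝓝 0) := tendsto_exp_two_mul_sqrt_log_div_sqrt
  have hhx : ∀ᶠ x in atTop, 2 ≤ x ∧ 1 ≤ h x ∧ 2 * h x ≤ x := by
    filter_upwards [eventually_ge_atTop 2,
      hh_sqrt.eventually (ge_mem_nhds (by norm_num : (0 : ℝ) < 1 / 2))] with x hx hhx
    have hs : √x ≤ x := by
      nlinarith [mul_self_sqrt (show 0 ≤ x by linarith), one_le_sqrt.2 (show 1 ≤ x by linarith)]
    refine ⟨hx, one_le_exp (by positivity), ?_⟩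
    rw [div_le_iff₀ (by positivity)] at hhx
    linarith
  refine tendsto_conv_div_of_split (h := h) (ε := fun x => exp (10 * (h x / √x)) - 1)
    (δ := fun x => 2 * exp (4 - √(log x + 1))) oscTail_nonneg
    (fun x hx => oscTail_of_lt_one (by linarith)) integrable_oscTail
    integrable_conv_oscTail hh ?_ ?_ ((eventually_ge_atTop 1).mono fun x hx => oscTail_pos hx)
    (hhx.mono fun x hx => hx.2.2) ?_ ?_
  · simpa using
      ((continuous_exp.tendsto 0).comp (by simpa using hh_sqrt.const_mul 10)).sub_const 1
  · simpa [sub_eq_add_neg] using (tendsto_exp_atBot.comp (tendsto_atBot_add_const_left _ 4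
      (tendsto_neg_atTop_atBot.comp tendsto_sqrt_log_add_one))).const_mul 2
  · filter_upwards [hhx] with x hx u hu
    obtain ⟨hx, -, hhx⟩ := hx
    obtain ⟨hu0, hux⟩ := hu
    have hu : |x - u - x| = u := by rw [sub_sub_cancel_left, abs_neg, abs_of_nonneg hu0]
    refine (abs_oscTail_sub_le_of_sqrt hx (by rw [hu]; linarith)).trans
      (mul_le_mul_of_nonneg_right (sub_le_sub_right (exp_le_exp.2 ?_) 1) (oscTail_nonneg x))
    rw [hu, mul_div_assoc]
    gcongr
  · filter_upwards [hhx] with x hx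
    obtain ⟨hx, h1, hhx⟩ := hx
    refine (integral_oscTail_conv_mid_le hx h1 hhx).trans_eq ?_
    rw [mul_div_assoc, ← exp_sub]
    ring_nf

noncomputable def oscDensity (x : ℝ) : ℝ := (∫ y, oscTail y)⁻¹ * oscTail x

lemma subexpDensity_oscDensity : SubexpDensity oscDensity :=
  subexpDensity_normalize oscTail_nonneg integral_oscTail_pos longTailedFun_oscTail
    tendsto_conv_oscTail_div

lemma integrable_oscDensity : Integrable oscDensity := integrable_oscTail.const_mul _

lemma oscDensity_nonneg (x : ℝ) : 0 ≤ oscDensity x :=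
  mul_nonneg (inv_nonneg.2 integral_oscTail_pos.le) (oscTail_nonneg x)

lemma integral_paretoPDFReal {t r : ℝ} (ht : 0 < t) (hr : 0 < r) :
    ∫ x, paretoPDFReal t r x = 1 := by
  rw [integral_eq_lintegral_of_nonneg_ae (ae_of_all _ (paretoPDFReal_nonneg ht.le hr.le))
    (measurable_paretoPDFReal t r).aestronglyMeasurable]
  change (∫⁻ x, paretoPDF t r x).toReal = 1
  simp [lintegral_paretoPDF_eq_one ht hr]

lemma paretoPDFReal_one_le {r : ℝ} (hr : 0 ≤ r) (x : ℝ) : paretoPDFReal 1 r x ≤ r := by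
  unfold paretoPDFReal
  split_ifs with hx
  · rw [one_rpow, mul_one]
    exact mul_le_of_le_one_right hr (rpow_le_one_of_one_le_of_nonpos hx (by linarith))
  · exact hr

lemma mul_rpow_le_paretoPDFReal_one {r w y : ℝ} (hr : 0 ≤ r) (hw : 1 ≤ w) (hwy : w ≤ y) :
    r * y ^ (-(r + 1)) ≤ paretoPDFReal 1 r w := by
  rw [paretoPDFReal, if_pos hw, one_rpow, mul_one]
  exact mul_le_mul_of_nonneg_left (rpow_le_rpow_of_nonpos (by linarith) hwy (by linarith)) hr

noncomputable def mixDensity (x : ℝ) : ℝ := 2⁻¹ * oscDensity x + 2⁻¹ * paretoPDFReal 1 2⁻¹ (-x)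

lemma mixDensity_nonneg (x : ℝ) : 0 ≤ mixDensity x :=
  add_nonneg (mul_nonneg (by norm_num) (oscDensity_nonneg x))
    (mul_nonneg (by norm_num) (paretoPDFReal_nonneg zero_le_one (by norm_num) _))

lemma integrable_mixDensity : Integrable mixDensity :=
  (integrable_oscDensity.const_mul _).add
    ((Integrable.of_integral_ne_zero (by simp [integral_paretoPDFReal])).comp_neg.const_mul _)

lemma isDensity_mixDensity : IsDensity mixDensity := by
  have hpareto : ∫ x, paretoPDFReal 1 2⁻¹ x = 1 := integral_paretoPDFReal one_pos (by norm_num)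
  have hint : Integrable (paretoPDFReal 1 2⁻¹) := .of_integral_ne_zero (by simp [hpareto])
  refine ⟨mixDensity_nonneg, ?_⟩
  simp only [mixDensity]
  rw [integral_add (integrable_oscDensity.const_mul _)
    (hint.comp_neg.const_mul _), integral_const_mul, integral_const_mul,
    integral_neg_eq_self (paretoPDFReal 1 2⁻¹), hpareto, subexpDensity_oscDensity.1.1.2]
  norm_num

lemma mixDensity_of_neg_one_lt {x : ℝ} (hx : -1 < x) : mixDensity x = 2⁻¹ * oscDensity x := by
  rw [mixDensity, paretoPDFReal, if_neg (by linarith), mul_zero, add_zero]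

lemma integrable_conv_mixDensity (x : ℝ) :
    Integrable fun u => mixDensity (x - u) * mixDensity u := by
  refine integrable_conv_integrand (M := 2⁻¹ * (∫ y, oscTail y)⁻¹ + 2⁻¹ * 2⁻¹)
    integrable_mixDensity (fun y => ?_) x
  rw [abs_of_nonneg (mixDensity_nonneg y), mixDensity, oscDensity]
  gcongr
  · exact mul_le_of_le_one_right (inv_nonneg.2 integral_oscTail_pos.le) (oscTail_le_one y)
  · exact paretoPDFReal_one_le (by norm_num) _

lemma half_oscDensity_le_mixDensity (x : ℝ) : 2⁻¹ * oscDensity x ≤ mixDensity x :=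
  le_add_of_nonneg_right
    (mul_nonneg (by norm_num) (paretoPDFReal_nonneg zero_le_one (by norm_num) _))

lemma half_paretoPDFReal_le_mixDensity (x : ℝ) : 2⁻¹ * paretoPDFReal 1 2⁻¹ (-x) ≤ mixDensity x :=
  le_add_of_nonneg_left (mul_nonneg (by norm_num) (oscDensity_nonneg x))

lemma oscTail_exp_sq {θ : ℝ} (hθ : 0 ≤ θ) :
    oscTail (exp (θ ^ 2)) = exp (-((3 + sin θ) * θ ^ 2)) := by
  rw [oscTail_of_one_le (one_le_exp (sq_nonneg θ)), log_exp, oscRate_sq hθ]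

lemma exp_neg_ten_mul_le_oscTail {y v : ℝ} (hy : 2 ≤ y) (hyv : y ≤ v) (hvy : v ≤ y + 1) :
    exp (-10) * oscTail y ≤ oscTail v := by
  have hv : 2 ≤ v := hy.trans hyv
  have hdist : |y - v| ≤ 1 := abs_le.2 ⟨by linarith, by linarith⟩
  have h := (abs_le.1 (abs_oscTail_sub_le_of_sqrt hv (hdist.trans (by linarith)))).2
  have hη : 10 * |y - v| / √v ≤ 10 := by
    rw [div_le_iff₀ (by positivity)]
    nlinarith [one_le_sqrt.2 (by linarith : 1 ≤ v)]
  have : oscTail y ≤ exp 10 * oscTail v := by nlinarith [exp_le_exp.2 hη, oscTail_nonneg v]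
  calc exp (-10) * oscTail y ≤ exp (-10) * (exp 10 * oscTail v) :=
        mul_le_mul_of_nonneg_left this (exp_pos _).le
    _ = oscTail v := by rw [← mul_assoc, ← exp_add]; simp

lemma mixDensity_exp_sq {θ : ℝ} (hθ : 0 ≤ θ) (hsin : sin θ = 1) :
    mixDensity (exp (θ ^ 2)) = (∫ y, oscTail y)⁻¹ / 2 * exp (-(4 * θ ^ 2)) := by
  rw [mixDensity_of_neg_one_lt (by linarith [one_le_exp (sq_nonneg θ)]), oscDensity,
    oscTail_exp_sq hθ, hsin]
  ring_nf

lemma le_conv_mixDensity_exp_sq {θ : ℝ} (hθ : 0 ≤ θ) (hsin : sin θ = 1) :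
    (∫ y, oscTail y)⁻¹ / 8 * exp (-10 - 7 / 2 * (θ + π) ^ 2)
      ≤ conv mixDensity mixDensity (exp (θ ^ 2)) := by
  set φ := θ + π
  set x := exp (θ ^ 2) with hx
  set y := exp (φ ^ 2) with hy
  have hx1 : 1 ≤ x := one_le_exp (sq_nonneg θ)
  have hxy : 2 * x ≤ y := calc
    2 * x ≤ exp 1 * x := by gcongr; linarith [add_one_le_exp (1 : ℝ)]
    _ ≤ y := by rw [hx, hy, ← exp_add, exp_le_exp]; nlinarith [pi_gt_three]
  have hoscTail_y : exp (-10 - 2 * φ ^ 2) = exp (-10) * oscTail y := by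
    rw [oscTail_exp_sq (by linarith [pi_pos]), sin_add_pi, hsin, ← exp_add]
    ring_nf
  -- for `u ∈ (x - y - 1, x - y]`, `x - u` lies just right of the peak `y` of `oscTail`,
  -- and `-u ∈ [y - x, y)` lies in the Pareto tail
  refine le_trans (le_of_eq ?_) (mul_le_conv (c := x - y - 1) mixDensity_nonneg
    (integrable_conv_mixDensity x) (a := (∫ y, oscTail y)⁻¹ / 2 * exp (-10 - 2 * φ ^ 2))
    (b := exp (-(3 / 2 * φ ^ 2)) / 4) (by positivity)
    (fun u hu => (half_oscDensity_le_mixDensity _).trans' ?_)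
    (fun u hu => (half_paretoPDFReal_le_mixDensity _).trans' ?_))
  · rw [show -10 - 7 / 2 * φ ^ 2 = (-10 - 2 * φ ^ 2) + -(3 / 2 * φ ^ 2) by ring, exp_add]
    ring
  · rw [oscDensity, hoscTail_y, div_eq_inv_mul, mul_assoc]
    gcongr
    · exact (inv_pos.2 integral_oscTail_pos).le
    · refine exp_neg_ten_mul_le_oscTail ?_ ?_ ?_ <;> linarith [hu.1, hu.2]
  · have := mul_rpow_le_paretoPDFReal_one (r := 2⁻¹) (y := y) (by norm_num)
      (show 1 ≤ -u by linarith [hu.2]) (by linarith [hu.1])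
    rw [← exp_mul, show φ ^ 2 * -(2⁻¹ + 1) = -(3 / 2 * φ ^ 2) by ring] at this
    linarith

lemma three_le_conv_mixDensity_div {θ : ℝ} (hθ : 16 * π ≤ θ) (hsin : sin θ = 1) :
    3 ≤ conv mixDensity mixDensity (exp (θ ^ 2)) / mixDensity (exp (θ ^ 2)) := by
  have hθ0 : 0 ≤ θ := by nlinarith [pi_pos]
  have hI := inv_pos.2 integral_oscTail_pos
  have hexp : 12 * exp (-(4 * θ ^ 2)) ≤ exp (-10 - 7 / 2 * (θ + π) ^ 2) := calc
    12 * exp (-(4 * θ ^ 2)) ≤ exp 11 * exp (-(4 * θ ^ 2)) := by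
      gcongr; linarith [add_one_le_exp (11 : ℝ)]
    _ ≤ _ := by rw [← exp_add, exp_le_exp]; nlinarith [pi_gt_three]
  rw [mixDensity_exp_sq hθ0 hsin, le_div_iff₀ (by positivity)]
  refine le_trans ?_ (le_conv_mixDensity_exp_sq hθ0 hsin)
  nlinarith [mul_le_mul_of_nonneg_left hexp hI.le]

lemma not_subexpDensity_mixDensity : ¬ SubexpDensity mixDensity := by
  set θ : ℕ → ℝ := fun k => π / 2 + 2 * π * k
  have hθ : Tendsto θ atTop atTop := tendsto_atTop_add_const_left _ _
    (tendsto_natCast_atTop_atTop.const_mul_atTop (by positivity))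
  refine not_subexpDensity_of_le_conv_div (x := fun k => exp (θ k ^ 2)) (by norm_num : (2 : ℝ) < 3)
    ?_ ?_
  · exact tendsto_exp_atTop.comp ((tendsto_pow_atTop two_ne_zero).comp hθ)
  · filter_upwards [eventually_ge_atTop 8] with k hk
    refine three_le_conv_mixDensity_div ?_ ?_
    · have : (8 : ℝ) ≤ k := by exact_mod_cast hk
      show 16 * π ≤ π / 2 + 2 * π * k
      nlinarith [pi_pos, mul_le_mul_of_nonneg_left this pi_pos.le]
    · rw [show θ k = π / 2 + k * (2 * π) by ring, sin_add_nat_mul_two_pi, sin_pi_div_two]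

lemma tendsto_mixDensity_div :
    Tendsto (fun x => mixDensity x / (2⁻¹ * oscDensity x)) atTop (𝓝 1) := by
  refine tendsto_const_nhds.congr' ?_
  filter_upwards [eventually_ge_atTop 1] with x hx
  rw [mixDensity_of_neg_one_lt (by linarith), div_self]
  exact mul_ne_zero (by norm_num) (mul_pos (inv_pos.2 integral_oscTail_pos) (oscTail_pos hx)).ne'

theorem stmt7 : ∃ (p₁ p₂ : ℝ → ℝ) (c : ℝ), 0 < c ∧ SubexpDensity p₁ ∧ IsDensity p₂ ∧
    ¬ SubexpDensity p₂ ∧ Tendsto (fun x => p₂ x / (c * p₁ x)) atTop (nhds 1) :=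
  ⟨oscDensity, mixDensity, 2⁻¹, by norm_num, subexpDensity_oscDensity, isDensity_mixDensity,
    not_subexpDensity_mixDensity, tendsto_mixDensity_div⟩
end

section
/- Let f and g be probability densities supported on [0,∞). If f is a subexponential density and g(x) ∼ c·f(x) as x → ∞ for some c > 0, then g is a subexponential density. (One-sided closure of S_d under asymptotic equivalence.) -/
open MeasureTheory Filter Set

/-!
Asymptotic equivalence `g ∼ c f` transfers long-tailedness directly. For the convolution, split
`g ⊗ g (x)` at `T` and `x - T`. By the uniform convergence theorem for long-tailed functions each
of the two edge pieces is `∼ g(x) ∫₀ᵀ g`. On the middle piece both arguments exceed `T`, so it is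
at most a constant times the middle piece of `f ⊗ f`, measured against `f(x)`; since `f` is
subexponential, the latter tends to `2 - 2 ∫₀ᵀ f`. Letting `T → ∞` gives `g ⊗ g (x) / g(x) → 2`.
-/

open Topology

lemma dist_div_one_le {p q δ : ℝ} (hδ : δ ≤ 1 / 2) (hp : dist p 1 < δ) (hq : dist q 1 < δ) :
    dist (p / q) 1 ≤ 4 * δ := by
  rw [Real.dist_eq, abs_lt] at hp hq
  have hq0 : 0 < q := by linarith
  rw [Real.dist_eq, div_sub_one hq0.ne', abs_div, abs_of_pos hq0, div_le_iff₀ hq0, abs_le]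
  constructor <;> nlinarith

lemma exists_mem_Icc_notMem_of_volume_lt {s₁ s₂ : Set ℝ} {T : ℝ} (a : ℝ)
    (h : volume s₁ + volume s₂ < ENNReal.ofReal T) : ∃ t ∈ Icc 0 T, t ∉ s₁ ∧ t + a ∉ s₂ := by
  by_contra! hcover
  have hsub : Icc 0 T ⊆ s₁ ∪ (· + a) ⁻¹' s₂ := fun t ht => by
    by_cases h₁ : t ∈ s₁
    · exact Or.inl h₁
    · exact Or.inr (hcover t ht h₁)
  have := calc ENNReal.ofReal T = volume (Icc 0 T) := by rw [Real.volume_Icc, sub_zero]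
    _ ≤ volume s₁ + volume ((· + a) ⁻¹' s₂) := (measure_mono hsub).trans (measure_union_le _ _)
    _ = volume s₁ + volume s₂ := by rw [measure_preimage_add_right]
  exact this.not_gt h

lemma tendsto_volume_dist_div_ge {φ : ℝ → ℝ} (hm : AEMeasurable φ)
    (hφ : ∀ a, Tendsto (fun x => φ (x + a) / φ x) atTop (𝓝 1)) (K : ℝ) {δ : ℝ} (hδ : 0 < δ) :
    Tendsto (fun x => volume (Icc 0 K ∩ {t | δ ≤ dist (φ (x + t) / φ x) 1})) atTop (𝓝 0) := by
  refine tendsto_iff_seq_tendsto.2 fun z hz => ?_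
  have hmeas (n : ℕ) : AEStronglyMeasurable (fun t => φ (z n + t) / φ (z n))
      (volume.restrict (Icc 0 K)) :=
    ((hm.comp_quasiMeasurePreserving
      (measurePreserving_add_left volume (z n)).quasiMeasurePreserving).div_const _
      ).aestronglyMeasurable.restrict
  have := tendstoInMeasure_iff_dist.1 (tendstoInMeasure_of_tendsto_ae hmeas (g := fun _ => 1)
    (ae_of_all _ fun t => (hφ t).comp hz)) δ hδ
  simpa only [Measure.restrict_apply' measurableSet_Icc, inter_comm, Function.comp_def] using this

theorem LongTailedFun.eventually_forall_dist_div_le {φ : ℝ → ℝ} (hφ : LongTailedFun φ)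
    (hm : AEMeasurable φ) {T ε : ℝ} (hT : 0 < T) (hε : 0 < ε) :
    ∀ᶠ x in atTop, ∀ a ∈ Icc 0 T, dist (φ (x - a) / φ x) 1 ≤ ε := by
  set δ := min (ε / 4) (1 / 2)
  have hδ : 0 < δ := by positivity
  set bad := fun x => Icc 0 (2 * T) ∩ {t | δ ≤ dist (φ (x + t) / φ x) 1}
  have hsmall : ∀ᶠ x in atTop, volume (bad x) < ENNReal.ofReal (T / 2) ∧ 0 < φ x :=
    ((tendsto_volume_dist_div_ge hm hφ.2 (2 * T) hδ).eventually
      (gt_mem_nhds (by simpa using hT))).and hφ.1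
  obtain ⟨N, hN⟩ := eventually_atTop.1 hsmall
  filter_upwards [eventually_ge_atTop (N + T)] with x hx a ha
  have hx₁ := (hN x (by linarith)).1
  have hy₁ := (hN (x - a) (by linarith [ha.2])).1
  have hvol : volume (bad x) + volume (bad (x - a)) < ENNReal.ofReal T := by
    calc _ < ENNReal.ofReal (T / 2) + ENNReal.ofReal (T / 2) := ENNReal.add_lt_add hx₁ hy₁
      _ = ENNReal.ofReal T := by
        rw [← ENNReal.ofReal_add (by positivity) (by positivity), add_halves]
  -- a shift `t` good for both `x` and `x - a` links `φ (x - a)` to `φ x` through `φ (x + t)`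
  obtain ⟨t, ht, htx, hty⟩ := exists_mem_Icc_notMem_of_volume_lt a hvol
  have hgood {y s} (hs : s ∈ Icc 0 (2 * T)) (hbad : s ∉ bad y) : dist (φ (y + s) / φ y) 1 < δ :=
    not_le.1 fun h => hbad ⟨hs, h⟩
  have h₁ := hgood ⟨ht.1, by linarith [ht.2]⟩ htx
  have h₂ := hgood ⟨by linarith [ht.1, ha.1], by linarith [ht.2, ha.2]⟩ hty
  rw [show x - a + (t + a) = x + t by ring] at h₂
  have hxt : φ (x + t) ≠ 0 := (hN (x + t) (by linarith [ht.1])).2.ne'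
  calc dist (φ (x - a) / φ x) 1 = dist ((φ (x + t) / φ x) / (φ (x + t) / φ (x - a))) 1 := by
        rw [div_div_div_cancel_left' _ _ hxt]
    _ ≤ 4 * δ := dist_div_one_le (min_le_right _ _) h₁ h₂
    _ ≤ ε := by linarith [min_le_left (ε / 4) (1 / 2)]

lemma aemeasurable_sub_mul {ψ : ℝ → ℝ} (hψ : AEMeasurable ψ) (x : ℝ) :
    AEMeasurable (fun u => ψ (x - u) * ψ u) :=
  (hψ.comp_quasiMeasurePreserving
    (Measure.measurePreserving_sub_left volume x).quasiMeasurePreserving).mul hψ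

theorem LongTailedFun.eventually_forall_abs_le {ψ : ℝ → ℝ} (hψ : LongTailedFun ψ)
    (hm : AEMeasurable ψ) {T : ℝ} (hT : 0 < T) :
    ∀ᶠ x in atTop, 0 < ψ x ∧ ∀ a ∈ Icc 0 T, |ψ (x - a)| ≤ 2 * ψ x := by
  filter_upwards [hψ.eventually_forall_dist_div_le hm hT one_pos, hψ.1] with x hx hx0
  refine ⟨hx0, fun a ha => ?_⟩
  have := hx a ha
  rw [Real.dist_eq, abs_le, le_sub_iff_add_le, sub_le_iff_le_add, div_le_iff₀ hx0,
    le_div_iff₀ hx0] at this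
  rw [abs_le]
  constructor <;> linarith

theorem LongTailedFun.eventually_intervalIntegrable_sub_mul {ψ : ℝ → ℝ} (hψ : LongTailedFun ψ)
    (hint : Integrable ψ) {T : ℝ} (hT : 0 < T) :
    ∀ᶠ x in atTop, IntervalIntegrable (fun u => ψ (x - u) * ψ u) volume 0 T := by
  filter_upwards [hψ.eventually_forall_abs_le hint.aemeasurable hT] with x ⟨hx0, hx⟩
  refine (hint.intervalIntegrable.norm.const_mul (2 * ψ x)).mono_fun'
    (aemeasurable_sub_mul hint.aemeasurable x).aestronglyMeasurable.restrict ?_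
  rw [EventuallyLE, uIoc_of_le hT.le, ae_restrict_iff' measurableSet_Ioc]
  refine ae_of_all _ fun u hu => ?_
  rw [norm_mul, Real.norm_eq_abs]
  exact mul_le_mul_of_nonneg_right (hx u (Ioc_subset_Icc_self hu)) (norm_nonneg _)

theorem LongTailedFun.tendsto_intervalIntegral_sub_mul_div {ψ : ℝ → ℝ} (hψ : LongTailedFun ψ)
    (hint : Integrable ψ) {T : ℝ} (hT : 0 < T) :
    Tendsto (fun x => (∫ u in 0..T, ψ (x - u) * ψ u) / ψ x) atTop (𝓝 (∫ u in 0..T, ψ u)) := by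
  simp_rw [← intervalIntegral.integral_div]
  refine intervalIntegral.tendsto_integral_filter_of_dominated_convergence (fun u => 2 * ‖ψ u‖)
    (Eventually.of_forall fun x =>
      ((aemeasurable_sub_mul hint.aemeasurable x).div_const _).aestronglyMeasurable.restrict)
    ?_ (hint.intervalIntegrable.norm.const_mul 2) (ae_of_all _ fun u _ => ?_)
  · filter_upwards [hψ.eventually_forall_abs_le hint.aemeasurable hT] with x ⟨hx0, hx⟩
    refine ae_of_all _ fun u hu => ?_
    rw [uIoc_of_le hT.le] at hu
    rw [mul_div_right_comm, norm_mul, Real.norm_eq_abs, abs_div, abs_of_pos hx0]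
    have hxu := hx u (Ioc_subset_Icc_self hu)
    exact mul_le_mul_of_nonneg_right ((div_le_iff₀ hx0).2 (by linarith)) (norm_nonneg _)
  · simpa [mul_div_right_comm, sub_eq_add_neg] using (hψ.2 (-u)).mul_const (ψ u)

lemma conv_self_eq_intervalIntegral {ψ : ℝ → ℝ} (hψ0 : ∀ y < 0, ψ y = 0) {x : ℝ} (hx : 0 ≤ x) :
    conv ψ ψ x = ∫ u in 0..x, ψ (x - u) * ψ u := by
  rw [intervalIntegral.integral_of_le hx, ← integral_Icc_eq_integral_Ioc, conv]
  refine (setIntegral_eq_integral_of_forall_compl_eq_zero fun u hu => ?_).symm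
  rcases not_and_or.1 hu with hu | hu
  · rw [hψ0 u (not_le.1 hu), mul_zero]
  · rw [hψ0 (x - u) (by linarith [not_le.1 hu]), zero_mul]

lemma intervalIntegral_sub_mul_reflect (ψ : ℝ → ℝ) (x T : ℝ) :
    ∫ u in (x - T)..x, ψ (x - u) * ψ u = ∫ u in 0..T, ψ (x - u) * ψ u := by
  simpa [mul_comm] using
    (intervalIntegral.integral_comp_sub_left (fun u => ψ (x - u) * ψ u) x (a := 0) (b := T)).symm

lemma conv_self_eq_two_mul_add {ψ : ℝ → ℝ} (hψ0 : ∀ y < 0, ψ y = 0) {T x : ℝ} (hT : 0 ≤ T)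
    (hTx : 2 * T ≤ x) (h₁ : IntervalIntegrable (fun u => ψ (x - u) * ψ u) volume 0 T)
    (h₂ : IntervalIntegrable (fun u => ψ (x - u) * ψ u) volume T (x - T)) :
    conv ψ ψ x = 2 * (∫ u in 0..T, ψ (x - u) * ψ u) + ∫ u in T..(x - T), ψ (x - u) * ψ u := by
  have h₃ : IntervalIntegrable (fun u => ψ (x - u) * ψ u) volume (x - T) x := by
    simpa [mul_comm] using (h₁.comp_sub_left x).symm
  rw [conv_self_eq_intervalIntegral hψ0 (by linarith),
    ← intervalIntegral.integral_add_adjacent_intervals (h₁.trans h₂) h₃,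
    ← intervalIntegral.integral_add_adjacent_intervals h₁ h₂, intervalIntegral_sub_mul_reflect]
  ring

lemma IsDensity.integrable {ψ : ℝ → ℝ} (hψ : IsDensity ψ) : Integrable ψ :=
  Integrable.of_integral_ne_zero (by rw [hψ.2]; exact one_ne_zero)

lemma IsDensity.tendsto_intervalIntegral {ψ : ℝ → ℝ} (hψ : IsDensity ψ)
    (hψ0 : ∀ y < 0, ψ y = 0) : Tendsto (fun T => ∫ u in 0..T, ψ u) atTop (𝓝 1) := by
  have h := intervalIntegral_tendsto_integral_Ioi 0 hψ.integrable.integrableOn tendsto_id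
  rwa [← integral_Ici_eq_integral_Ioi,
    setIntegral_eq_integral_of_forall_compl_eq_zero (s := Ici 0) fun u hu => hψ0 u (not_le.1 hu),
    hψ.2] at h

lemma integrable_sub_mul_of_conv_ne_zero {ψ : ℝ → ℝ} {x : ℝ} (h : conv ψ ψ x ≠ 0) :
    Integrable (fun u => ψ (x - u) * ψ u) :=
  Integrable.of_integral_ne_zero h

theorem SubexpDensity.tendsto_intervalIntegral_mid_div {f : ℝ → ℝ} (hf : SubexpDensity f)
    (hf0 : ∀ y < 0, f y = 0) {T : ℝ} (hT : 0 < T) :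
    Tendsto (fun x => (∫ u in T..(x - T), f (x - u) * f u) / f x) atTop
      (𝓝 (2 - 2 * ∫ u in 0..T, f u)) := by
  obtain ⟨⟨hfd, hflt⟩, hconv⟩ := hf
  refine (hconv.sub ((hflt.tendsto_intervalIntegral_sub_mul_div hfd.integrable hT).const_mul 2)
    ).congr' ?_
  filter_upwards [eventually_ge_atTop (2 * T), hconv.eventually_ne two_ne_zero] with x hx hne
  have hint := integrable_sub_mul_of_conv_ne_zero (div_ne_zero_iff.1 hne).1
  rw [conv_self_eq_two_mul_add hf0 hT.le hx hint.intervalIntegrable hint.intervalIntegrable]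
  ring

lemma eventually_bounds_of_tendsto_div {f g : ℝ → ℝ} {c : ℝ} (hc : 0 < c)
    (hf : ∀ᶠ x in atTop, 0 < f x) (h : Tendsto (fun x => g x / (c * f x)) atTop (𝓝 1)) :
    ∀ᶠ x in atTop, 0 < f x ∧ 0 < g x ∧ g x ≤ 2 * c * f x ∧ c * f x ≤ 2 * g x := by
  filter_upwards [h.eventually (Ioo_mem_nhds (by norm_num : (1 / 2 : ℝ) < 1) one_lt_two), hf]
    with x ⟨h₁, h₂⟩ hfx
  have hcf : 0 < c * f x := mul_pos hc hfx
  rw [lt_div_iff₀ hcf] at h₁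
  rw [div_lt_iff₀ hcf] at h₂
  exact ⟨hfx, by linarith, by linarith, by linarith⟩

theorem LongTailedFun.of_tendsto_div {f g : ℝ → ℝ} {c : ℝ} (hf : LongTailedFun f) (hc : 0 < c)
    (h : Tendsto (fun x => g x / (c * f x)) atTop (𝓝 1)) : LongTailedFun g := by
  have hbounds := eventually_bounds_of_tendsto_div hc hf.1 h
  refine ⟨hbounds.mono fun x hx => hx.2.1, fun a => ?_⟩
  have hshift : Tendsto (· + a) atTop atTop := tendsto_atTop_add_const_right _ a tendsto_id
  have := ((h.comp hshift).mul (hf.2 a)).div h one_ne_zero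
  rw [mul_one, div_one] at this
  refine this.congr' ?_
  filter_upwards [hbounds, hshift.eventually hf.1] with x ⟨hfx, hgx, _⟩ hfxa
  simp only [Pi.div_apply, Function.comp_apply]
  field_simp

lemma intervalIntegral_sub_mul_le_of_le {φ ψ : ℝ → ℝ} {C t₀ T x : ℝ} (hφ : AEMeasurable φ)
    (hφ0 : ∀ y, 0 ≤ φ y) (hle : ∀ y ≥ t₀, φ y ≤ C * ψ y) (hT : t₀ ≤ T) (hTx : T ≤ x - T)
    (hψ : IntervalIntegrable (fun u => ψ (x - u) * ψ u) volume T (x - T)) :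
    IntervalIntegrable (fun u => φ (x - u) * φ u) volume T (x - T) ∧
      ∫ u in T..(x - T), φ (x - u) * φ u ≤ C ^ 2 * ∫ u in T..(x - T), ψ (x - u) * ψ u := by
  have hpt : ∀ u ∈ Icc T (x - T), φ (x - u) * φ u ≤ C ^ 2 * (ψ (x - u) * ψ u) := fun u hu => by
    calc φ (x - u) * φ u ≤ (C * ψ (x - u)) * (C * ψ u) :=
          mul_le_mul (hle _ (by linarith [hu.2])) (hle _ (by linarith [hu.1])) (hφ0 _)
            ((hφ0 _).trans (hle _ (by linarith [hu.2])))
      _ = C ^ 2 * (ψ (x - u) * ψ u) := by ring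
  have hint : IntervalIntegrable (fun u => φ (x - u) * φ u) volume T (x - T) := by
    refine (hψ.const_mul (C ^ 2)).mono_fun'
      (aemeasurable_sub_mul hφ x).aestronglyMeasurable.restrict ?_
    rw [EventuallyLE, uIoc_of_le hTx, ae_restrict_iff' measurableSet_Ioc]
    refine ae_of_all _ fun u hu => ?_
    rw [Real.norm_eq_abs, abs_of_nonneg (mul_nonneg (hφ0 _) (hφ0 _))]
    exact hpt u (Ioc_subset_Icc_self hu)
  refine ⟨hint, ?_⟩
  rw [← intervalIntegral.integral_const_mul]
  exact intervalIntegral.integral_mono_on hTx hint (hψ.const_mul _) hpt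

lemma tendsto_of_eventually_bounds {ι κ α : Type*} [TopologicalSpace α] [LinearOrder α]
    [OrderTopology α] {l : Filter ι} {k : Filter κ} [k.NeBot] {u : ι → α} {a b : κ → ι → α}
    {A B : κ → α} {L : α} (ha : ∀ᶠ T in k, Tendsto (a T) l (𝓝 (A T)))
    (hb : ∀ᶠ T in k, Tendsto (b T) l (𝓝 (B T))) (hA : Tendsto A k (𝓝 L))
    (hB : Tendsto B k (𝓝 L)) (hab : ∀ᶠ T in k, ∀ᶠ x in l, a T x ≤ u x ∧ u x ≤ b T x) :
    Tendsto u l (𝓝 L) := by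
  refine tendsto_order.2 ⟨fun L' hL' => ?_, fun L' hL' => ?_⟩
  · obtain ⟨T, hAT, haT, habT⟩ := ((hA.eventually (lt_mem_nhds hL')).and (ha.and hab)).exists
    filter_upwards [haT.eventually (lt_mem_nhds hAT), habT] with x h₁ h₂ using h₁.trans_le h₂.1
  · obtain ⟨T, hBT, hbT, habT⟩ := ((hB.eventually (gt_mem_nhds hL')).and (hb.and hab)).exists
    filter_upwards [hbT.eventually (gt_mem_nhds hBT), habT] with x h₁ h₂ using h₂.2.trans_lt h₁

theorem SubexpDensity.eventually_mid_div_le {f g : ℝ → ℝ} {c : ℝ} (hf : SubexpDensity f)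
    (hg : IsDensity g) (hc : 0 < c) (h : Tendsto (fun x => g x / (c * f x)) atTop (𝓝 1)) :
    ∀ᶠ T in atTop, ∀ᶠ x in atTop,
      IntervalIntegrable (fun u => g (x - u) * g u) volume T (x - T) ∧
      (∫ u in T..(x - T), g (x - u) * g u) / g x ≤
        8 * c * ((∫ u in T..(x - T), f (x - u) * f u) / f x) := by
  obtain ⟨t₀, ht₀⟩ := eventually_atTop.1 (eventually_bounds_of_tendsto_div hc hf.1.2.1 h)
  filter_upwards [eventually_ge_atTop (max t₀ 0)] with T hT
  filter_upwards [eventually_ge_atTop (2 * T), hf.2.eventually_ne two_ne_zero] with x hx hconv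
  have hfint := integrable_sub_mul_of_conv_ne_zero (div_ne_zero_iff.1 hconv).1
  obtain ⟨hfx, hgx, -, hgfx⟩ := ht₀ x (by linarith [le_max_left t₀ 0, le_max_right t₀ 0])
  obtain ⟨hmid, hmid_le⟩ := intervalIntegral_sub_mul_le_of_le hg.integrable.aemeasurable hg.1
    (fun y hy => (ht₀ y hy).2.2.1) (le_of_max_le_left hT) (by linarith) hfint.intervalIntegrable
  have hfmid : 0 ≤ (∫ u in T..(x - T), f (x - u) * f u) / f x := div_nonneg
    (intervalIntegral.integral_nonneg (by linarith) fun u _ => mul_nonneg (hf.1.1.1 _) (hf.1.1.1 _))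
    hfx.le
  refine ⟨hmid, (div_le_iff₀ hgx).2 ?_⟩
  calc _ ≤ (2 * c) ^ 2 * ∫ u in T..(x - T), f (x - u) * f u := hmid_le
    _ = 4 * c * ((∫ u in T..(x - T), f (x - u) * f u) / f x) * (c * f x) := by
      field_simp; ring
    _ ≤ 8 * c * ((∫ u in T..(x - T), f (x - u) * f u) / f x) * g x := by
      nlinarith [mul_nonneg hc.le hfmid]

theorem SubexpDensity.tendsto_conv_div_of_tendsto_div {f g : ℝ → ℝ} {c : ℝ}
    (hf : SubexpDensity f) (hf0 : ∀ y < 0, f y = 0) (hg : LongDensity g) (hg0 : ∀ y < 0, g y = 0)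
    (hc : 0 < c) (h : Tendsto (fun x => g x / (c * f x)) atTop (𝓝 1)) :
    Tendsto (fun x => conv g g x / g x) atTop (𝓝 2) := by
  obtain ⟨hgd, hglt⟩ := hg
  have hgint := hgd.integrable
  refine tendsto_of_eventually_bounds (k := atTop)
    (a := fun T x => 2 * ((∫ u in 0..T, g (x - u) * g u) / g x))
    (b := fun T x => 2 * ((∫ u in 0..T, g (x - u) * g u) / g x) +
      8 * c * ((∫ u in T..(x - T), f (x - u) * f u) / f x))
    (A := fun T => 2 * ∫ u in 0..T, g u)
    (B := fun T => 2 * (∫ u in 0..T, g u) + 8 * c * (2 - 2 * ∫ u in 0..T, f u))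
    ?_ ?_ ?_ ?_ ?_
  · filter_upwards [eventually_gt_atTop 0] with T hT
    exact (hglt.tendsto_intervalIntegral_sub_mul_div hgint hT).const_mul 2
  · filter_upwards [eventually_gt_atTop 0] with T hT
    exact ((hglt.tendsto_intervalIntegral_sub_mul_div hgint hT).const_mul 2).add
      ((hf.tendsto_intervalIntegral_mid_div hf0 hT).const_mul _)
  · simpa using (hgd.tendsto_intervalIntegral hg0).const_mul 2
  · have hF := hf.1.1.tendsto_intervalIntegral hf0
    have hG := hgd.tendsto_intervalIntegral hg0
    simpa using (hG.const_mul 2).add (((hF.const_mul 2).const_sub 2).const_mul (8 * c))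
  filter_upwards [hf.eventually_mid_div_le hgd hc h, eventually_gt_atTop 0] with T hmid hT
  filter_upwards [hmid, eventually_ge_atTop (2 * T), hglt.1,
    hglt.eventually_intervalIntegrable_sub_mul hgint hT] with x ⟨hint, hle⟩ hx hgx hedge
  have hgmid : 0 ≤ ∫ u in T..(x - T), g (x - u) * g u :=
    intervalIntegral.integral_nonneg (by linarith) fun u _ => mul_nonneg (hgd.1 _) (hgd.1 _)
  rw [conv_self_eq_two_mul_add hg0 hT.le hx hedge hint, add_div, mul_div_assoc]
  exact ⟨le_add_of_nonneg_right (div_nonneg hgmid hgx.le), add_le_add_right hle _⟩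

theorem stmt8 (f g : ℝ → ℝ) (hf0 : ∀ x < (0:ℝ), f x = 0) (hg0 : ∀ x < (0:ℝ), g x = 0)
    (hgd : IsDensity g) (hf : SubexpDensity f) (c : ℝ) (hc : 0 < c)
    (h : Tendsto (fun x => g x / (c * f x)) atTop (nhds 1)) : SubexpDensity g := by
  have hg : LongDensity g := ⟨hgd, hf.1.2.of_tendsto_div hc h⟩
  exact ⟨hg, hf.tendsto_conv_div_of_tendsto_div hf0 hg hg0 hc h⟩
end

section
/- If f is a long-tailed probability density on [0,∞), then for every n ∈ ℕ the n-fold convolution power f^{⊗n} is also a long-tailed density. -/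
open MeasureTheory Filter Set

/-- `fconvPow f n` is the (n+1)-fold convolution power of `f`. -/
noncomputable def fconvPow (f : ℝ → ℝ) : ℕ → ℝ → ℝ
  | 0 => f
  | n + 1 => conv f (fconvPow f n)

/-! It suffices to show that `conv f g` is long-tailed when `f` and `g` are. Integrable
long-tailed functions are eventually bounded, so the slices `u ↦ f (x - u) * g u` are integrable
for large `x`. For a shift `a ≥ 0`, split `conv f g (x + a)` at a point `m ≤ x / 2`: where `u < m`
the factor `f` is evaluated in its tail, and in the reflected variable `v = x + a - u` the factor
`g` is, so both pieces move by a factor `1 ± ε`. What is left over is the mass of a single window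
of length `a`, and choosing `m` by pigeonhole among `⌈1 / ε⌉` consecutive windows makes it at most
`ε * conv f g (x + a)`. Negative shifts follow by inverting the ratio. -/

open Topology

lemma IsDensity.integrable_s12 {f : ℝ → ℝ} (hf : IsDensity f) : Integrable f := by
  by_contra h
  exact zero_ne_one ((integral_undef h).symm.trans hf.2)

lemma conv_eq_integral_mul_comp_sub (f g : ℝ → ℝ) (y : ℝ) :
    conv f g y = ∫ v, f v * g (y - v) := by
  unfold conv
  simpa only [sub_sub_cancel] using integral_sub_left_eq_self (fun v => f v * g (y - v)) volume y

lemma isDensity_conv {f g : ℝ → ℝ} (hf : IsDensity f) (hg : IsDensity g) :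
    IsDensity (conv f g) := by
  refine ⟨fun x => integral_nonneg fun u => mul_nonneg (hf.1 _) (hg.1 _), ?_⟩
  have hconv : conv f g = convolution g f (ContinuousLinearMap.mul ℝ ℝ) := by
    ext x
    simp [conv, convolution_def, mul_comm]
  rw [hconv, integral_convolution _ hg.integrable_s12 hf.integrable_s12]
  simp [hf.2, hg.2]

/-- Fatou's lemma on `[0, 1]` along points `x k` where `f (x k) → ∞`: long-tailedness would make
`f (x k + a) → ∞` for every `a`, contradicting integrability. -/
lemma LongTailedFun.isBoundedUnder_le {f : ℝ → ℝ} (hf : LongTailedFun f) (hfi : Integrable f) :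
    IsBoundedUnder (· ≤ ·) atTop f := by
  by_contra hunb
  have hfreq : ∀ k : ℕ, ∃ b ≥ (k : ℝ), (k : ℝ) < f b := by
    intro k
    simp only [IsBoundedUnder, IsBounded, eventually_map, not_exists, not_eventually,
      not_le] at hunb
    exact frequently_atTop.1 (hunb k) k
  choose x hxk hfx using hfreq
  have hx : Tendsto x atTop atTop := tendsto_atTop_mono hxk tendsto_natCast_atTop_atTop
  have hfx' : Tendsto (fun k => f (x k)) atTop atTop :=
    tendsto_atTop_mono (fun k => (hfx k).le) tendsto_natCast_atTop_atTop
  have hshift : ∀ a, Tendsto (fun k => f (x k + a)) atTop atTop := by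
    intro a
    refine (((hf.2 a).comp hx).pos_mul_atTop one_pos hfx').congr fun k => ?_
    have : f (x k) ≠ 0 := ((Nat.cast_nonneg k).trans_lt (hfx k)).ne'
    simp [Function.comp_apply, div_mul_cancel₀ _ this]
  have hmeas : ∀ k, AEMeasurable (fun a => ENNReal.ofReal (f (x k + a)))
      (volume.restrict (Icc (0 : ℝ) 1)) := fun k =>
    (hfi.aemeasurable.comp_quasiMeasurePreserving
      (measurePreserving_add_left volume (x k)).quasiMeasurePreserving).ennreal_ofReal.restrict
  have hfatou := lintegral_liminf_le' (u := atTop) hmeas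
  have hliminf :
      ∫⁻ a in Icc (0 : ℝ) 1, liminf (fun k => ENNReal.ofReal (f (x k + a))) atTop = ⊤ := by
    have htop : ∀ a, liminf (fun k => ENNReal.ofReal (f (x k + a))) atTop = ⊤ := fun a =>
      (ENNReal.tendsto_ofReal_atTop.comp (hshift a)).liminf_eq
    simp [htop]
  have hbound : ∀ k, ∫⁻ a in Icc (0 : ℝ) 1, ENNReal.ofReal (f (x k + a)) ≤
      ∫⁻ a, ENNReal.ofReal (f a) := fun k =>
    (setLIntegral_le_lintegral _ _).trans_eq
      (lintegral_add_left_eq_self (fun a => ENNReal.ofReal (f a)) (x k))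
  have hle := hfatou.trans ((liminf_le_liminf (.of_forall hbound)).trans_eq (liminf_const _))
  rw [hliminf, top_le_iff] at hle
  exact hfi.lintegral_lt_top.ne hle

lemma LongTailedFun.eventually_abs_sub_le {f : ℝ → ℝ} (hf : LongTailedFun f) (a : ℝ) {ε : ℝ}
    (hε : 0 < ε) : ∀ᶠ z in atTop, |f (z + a) - f z| ≤ ε * f z := by
  filter_upwards [hf.1, Metric.tendsto_nhds.1 (hf.2 a) ε hε] with z hz hdist
  rw [Real.dist_eq] at hdist
  have : f (z + a) - f z = (f (z + a) / f z - 1) * f z := by field_simp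
  rw [this, abs_mul, abs_of_pos hz]
  exact mul_le_mul_of_nonneg_right hdist.le hz.le

lemma eventually_integrable_mul_comp_sub {f g : ℝ → ℝ} (hf : Integrable f) (hg : Integrable g)
    (hf0 : 0 ≤ f) (hg0 : 0 ≤ g) (hfb : IsBoundedUnder (· ≤ ·) atTop f)
    (hgb : IsBoundedUnder (· ≤ ·) atTop g) :
    ∀ᶠ x in atTop, Integrable (fun u => f (x - u) * g u) := by
  obtain ⟨C, hC⟩ := hfb.sup hgb
  obtain ⟨X, hX⟩ := eventually_atTop.1 (eventually_map.1 hC)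
  have hC0 : 0 ≤ C := (hf0 X).trans (le_sup_left.trans (hX X le_rfl))
  filter_upwards [eventually_ge_atTop (2 * X)] with x hx
  refine Integrable.mono' ((hg.add (hf.comp_sub_left x)).const_mul C)
    ((hf.1.comp_quasiMeasurePreserving (quasiMeasurePreserving_sub_left volume x)).mul hg.1)
    (.of_forall fun u => ?_)
  rw [Real.norm_of_nonneg (mul_nonneg (hf0 _) (hg0 _))]
  show f (x - u) * g u ≤ C * (g u + f (x - u))
  have hfu := mul_nonneg hC0 (hf0 (x - u))
  have hgu := mul_nonneg hC0 (hg0 u)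
  rcases le_or_gt X (x - u) with hu | hu
  · nlinarith [mul_le_mul_of_nonneg_right (le_sup_left.trans (hX _ hu)) (hg0 u)]
  · nlinarith [mul_le_mul_of_nonneg_left (le_sup_right.trans (hX u (by linarith))) (hf0 (x - u))]

lemma eventually_conv_pos {f g : ℝ → ℝ} (hf : ∀ᶠ x in atTop, 0 < f x) (hf0 : 0 ≤ f) (hg0 : 0 ≤ g)
    (hg : 0 < ∫ u, g u) (hint : ∀ᶠ x in atTop, Integrable (fun u => f (x - u) * g u)) :
    ∀ᶠ x in atTop, 0 < conv f g x := by
  have hgi : Integrable g := by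
    by_contra h
    simp [integral_undef h] at hg
  obtain ⟨M, hM⟩ : ∃ M : ℕ, 0 < volume (Function.support g ∩ Iic (M : ℝ)) := by
    refine exists_measure_pos_of_not_measure_iUnion_null (ne_of_gt ?_)
    refine ((integral_pos_iff_support_of_nonneg hg0 hgi).1 hg).trans_le (measure_mono ?_)
    exact fun u hu => mem_iUnion.2 ⟨⌈u⌉₊, hu, Nat.le_ceil u⟩
  obtain ⟨T, hT⟩ := eventually_atTop.1 hf
  filter_upwards [hint, eventually_ge_atTop (T + M)] with x hx hxT
  rw [conv, integral_pos_iff_support_of_nonneg (fun u => mul_nonneg (hf0 _) (hg0 _)) hx]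
  refine hM.trans_le (measure_mono fun u ⟨hgu, huM⟩ => ?_)
  exact mul_ne_zero (hT _ (by simp only [mem_Iic] at huM; linarith)).ne' hgu

lemma integral_eq_setIntegral_Iio_add_setIntegral_Iic_comp_sub {F : ℝ → ℝ} (hF : Integrable F)
    (y m : ℝ) : ∫ u, F u = (∫ u in Iio m, F u) + ∫ v in Iic (y - m), F (y - v) := by
  have hpre : (fun v => y - v) ⁻¹' Ici m = Iic (y - m) := by
    ext v
    simp [sub_nonneg.symm]
  rw [← hpre, (Measure.measurePreserving_sub_left volume y).setIntegral_preimage_emb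
    (measurableEmbedding_subLeft y) F]
  exact (intervalIntegral.integral_Iio_add_Ici hF.integrableOn hF.integrableOn).symm

lemma abs_setIntegral_sub_le {α : Type*} [MeasurableSpace α] {μ : Measure α} {F G : α → ℝ}
    {s : Set α} (hs : MeasurableSet s) (hF : IntegrableOn F s μ) (hG : IntegrableOn G s μ) {ε : ℝ}
    (h : ∀ u ∈ s, |G u - F u| ≤ ε * F u) :
    |∫ u in s, G u ∂μ - ∫ u in s, F u ∂μ| ≤ ε * ∫ u in s, F u ∂μ := by
  rw [← integral_sub hG hF, ← integral_const_mul, ← Real.norm_eq_abs]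
  exact norm_integral_le_of_norm_le (hF.const_mul ε)
    ((ae_restrict_iff' hs).2 (.of_forall fun u hu => (Real.norm_eq_abs _).trans_le (h u hu)))

lemma exists_setIntegral_Ioc_le_div {ψ : ℝ → ℝ} (hψ : Integrable ψ) (hψ0 : 0 ≤ ψ) (s : ℝ)
    {a : ℝ} (ha : 0 ≤ a) {N : ℕ} (hN : N ≠ 0) :
    ∃ j < N, ∫ v in Ioc (s + j * a) (s + (j + 1) * a), ψ v ≤ (∫ v, ψ v) / N := by
  have hmono : Monotone fun k : ℕ => s + k * a := fun i j hij => by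
    have : (i : ℝ) ≤ j := by exact_mod_cast hij
    nlinarith
  have hsum : ∑ j ∈ Finset.range N, ∫ v in Ioc (s + j * a) (s + (j + 1) * a), ψ v ≤
      ∑ _j ∈ Finset.range N, (∫ v, ψ v) / N := by
    have hadj := intervalIntegral.sum_integral_adjacent_intervals (μ := volume)
      (a := fun k : ℕ => s + k * a) (n := N) fun k _ => hψ.intervalIntegrable
    rw [Finset.sum_congr rfl fun j _ => intervalIntegral.integral_of_le (hmono j.le_succ),
      intervalIntegral.integral_of_le (hmono N.zero_le)] at hadj
    push_cast at hadj
    rw [hadj, Finset.sum_const, Finset.card_range, nsmul_eq_mul,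
      mul_div_cancel₀ _ (by exact_mod_cast hN)]
    exact setIntegral_le_integral hψ (.of_forall hψ0)
  obtain ⟨j, hj, hle⟩ := Finset.exists_le_of_sum_le (Finset.nonempty_range_iff.2 hN) hsum
  exact ⟨j, Finset.mem_range.1 hj, hle⟩

lemma abs_conv_add_sub_le {f g : ℝ → ℝ} (hf0 : 0 ≤ f) (hg0 : 0 ≤ g) {x a m ε : ℝ} (ha : 0 ≤ a)
    (hx : Integrable fun u => f (x - u) * g u) (hxa : Integrable fun u => f (x + a - u) * g u)
    (hf : ∀ z, x - m ≤ z → |f (z + a) - f z| ≤ ε * f z)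
    (hg : ∀ z, m ≤ z → |g (z + a) - g z| ≤ ε * g z) :
    |conv f g (x + a) - conv f g x| ≤
      ε * conv f g x + ∫ v in Ioc (x - m) (x + a - m), f v * g (x + a - v) := by
  have hψx : Integrable fun v => f v * g (x - v) := by
    simpa only [sub_sub_cancel] using hx.comp_sub_left x
  have hψxa : Integrable fun v => f v * g (x + a - v) := by
    simpa only [sub_sub_cancel] using hxa.comp_sub_left (x + a)
  have hsplit_x := integral_eq_setIntegral_Iio_add_setIntegral_Iic_comp_sub hx x m
  have hsplit_xa := integral_eq_setIntegral_Iio_add_setIntegral_Iic_comp_sub hxa (x + a) m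
  simp only [sub_sub_cancel] at hsplit_x hsplit_xa
  have hunion : ∫ v in Iic (x + a - m), f v * g (x + a - v) =
      (∫ v in Iic (x - m), f v * g (x + a - v)) +
        ∫ v in Ioc (x - m) (x + a - m), f v * g (x + a - v) := by
    rw [← setIntegral_union (Iic_disjoint_Ioc le_rfl) measurableSet_Ioc hψxa.integrableOn
      hψxa.integrableOn, Iic_union_Ioc_eq_Iic (by linarith)]
  have hA := abs_setIntegral_sub_le measurableSet_Iio hx.integrableOn hxa.integrableOn
    fun u (hu : u < m) => by
      rw [← sub_mul, abs_mul, abs_of_nonneg (hg0 u), show x + a - u = x - u + a by ring,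
        ← mul_assoc]
      exact mul_le_mul_of_nonneg_right (hf _ (by linarith)) (hg0 u)
  have hB := abs_setIntegral_sub_le measurableSet_Iic hψx.integrableOn hψxa.integrableOn
    fun v (hv : v ≤ x - m) => by
      rw [← mul_sub, abs_mul, abs_of_nonneg (hf0 v), show x + a - v = x - v + a by ring,
        mul_left_comm]
      exact mul_le_mul_of_nonneg_left (hg _ (by linarith)) (hf0 v)
  have hK : 0 ≤ ∫ v in Ioc (x - m) (x + a - m), f v * g (x + a - v) :=
    setIntegral_nonneg measurableSet_Ioc fun v _ => mul_nonneg (hf0 v) (hg0 _)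
  rw [conv, conv, hsplit_x, hsplit_xa, hunion]
  refine (abs_le.2 ⟨?_, ?_⟩) <;> linarith [abs_le.1 hA, abs_le.1 hB]

lemma eventually_abs_conv_add_sub_le {f g : ℝ → ℝ} (hf0 : 0 ≤ f) (hg0 : 0 ≤ g)
    (hf : LongTailedFun f) (hg : LongTailedFun g)
    (hint : ∀ᶠ x in atTop, Integrable fun u => f (x - u) * g u) {a : ℝ} (ha : 0 ≤ a) {ε : ℝ}
    (hε : 0 < ε) :
    ∀ᶠ x in atTop, |conv f g (x + a) - conv f g x| ≤ ε * (conv f g x + conv f g (x + a)) := by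
  set N := ⌈ε⁻¹⌉₊
  have hN : N ≠ 0 := (Nat.ceil_pos.2 (inv_pos.2 hε)).ne'
  have hNε : (N : ℝ)⁻¹ ≤ ε := inv_le_of_inv_le₀ hε (Nat.le_ceil _)
  obtain ⟨Tf, hTf⟩ := eventually_atTop.1 (hf.eventually_abs_sub_le a hε)
  obtain ⟨Tg, hTg⟩ := eventually_atTop.1 (hg.eventually_abs_sub_le a hε)
  have hint' : ∀ᶠ x in atTop, Integrable fun u => f (x + a - u) * g u :=
    (tendsto_atTop_add_const_right atTop a tendsto_id).eventually hint
  filter_upwards [hint, hint', eventually_ge_atTop (2 * Tf),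
    eventually_ge_atTop (2 * (Tg + N * a))] with x hx hxa hxf hxg
  have hψ : Integrable fun v => f v * g (x + a - v) := by
    simpa only [sub_sub_cancel] using hxa.comp_sub_left (x + a)
  obtain ⟨j, hjN, hj⟩ := exists_setIntegral_Ioc_le_div hψ (fun v => mul_nonneg (hf0 v) (hg0 _))
    (x / 2) ha hN
  obtain ⟨m, hm⟩ : ∃ m, m = x / 2 - j * a := ⟨_, rfl⟩
  have hja : 0 ≤ (j : ℝ) * a := by positivity
  have hjN : (j : ℝ) * a ≤ N * a := mul_le_mul_of_nonneg_right (by exact_mod_cast hjN.le) ha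
  have hK : ∫ v in Ioc (x - m) (x + a - m), f v * g (x + a - v) ≤ ε * conv f g (x + a) := by
    rw [show x - m = x / 2 + j * a by rw [hm]; ring,
      show x + a - m = x / 2 + (j + 1) * a by rw [hm]; ring, conv_eq_integral_mul_comp_sub]
    calc _ ≤ _ := hj
      _ = (N : ℝ)⁻¹ * ∫ v, f v * g (x + a - v) := div_eq_inv_mul _ _
      _ ≤ _ := mul_le_mul_of_nonneg_right hNε
        (integral_nonneg fun v => mul_nonneg (hf0 v) (hg0 _))
  calc |conv f g (x + a) - conv f g x|
      ≤ ε * conv f g x + ∫ v in Ioc (x - m) (x + a - m), f v * g (x + a - v) :=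
        abs_conv_add_sub_le hf0 hg0 ha hx hxa (fun z hz => hTf z (by linarith))
          fun z hz => hTg z (by linarith)
    _ ≤ ε * (conv f g x + conv f g (x + a)) := by linarith

lemma tendsto_div_of_abs_sub_le {α : Type*} {l : Filter α} {p q : α → ℝ}
    (hp : ∀ᶠ x in l, 0 < p x) (h : ∀ ε > 0, ∀ᶠ x in l, |q x - p x| ≤ ε * (p x + q x)) :
    Tendsto (fun x => q x / p x) l (𝓝 1) := by
  refine Metric.tendsto_nhds.2 fun δ hδ => ?_
  set ε := δ / (3 + δ)
  have hε : 0 < ε := by positivity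
  have hεδ : ε * (3 + δ) = δ := div_mul_cancel₀ _ (by positivity)
  filter_upwards [hp, h ε hε] with x hpx hx
  set r := q x / p x
  rw [show q x = r * p x from (div_mul_cancel₀ _ hpx.ne').symm,
    show r * p x - p x = (r - 1) * p x by ring, abs_mul, abs_of_pos hpx] at hx
  have hd : |r - 1| ≤ ε * (1 + r) :=
    le_of_mul_le_mul_right (by linarith) hpx
  have hd' : |r - 1| * (3 + δ) ≤ δ * (2 + |r - 1|) := by
    nlinarith [le_abs_self (r - 1)]
  rw [Real.dist_eq]
  nlinarith

lemma tendsto_shift_div_of_nonneg {h : ℝ → ℝ}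
    (H : ∀ a, 0 ≤ a → Tendsto (fun x => h (x + a) / h x) atTop (𝓝 1)) (a : ℝ) :
    Tendsto (fun x => h (x + a) / h x) atTop (𝓝 1) := by
  rcases le_or_gt 0 a with ha | ha
  · exact H a ha
  · have := ((H (-a) (by linarith)).inv₀ one_ne_zero).comp
      (tendsto_atTop_add_const_right atTop a tendsto_id)
    simpa [Function.comp_def, inv_div] using this

lemma longDensity_conv {f g : ℝ → ℝ} (hf : LongDensity f) (hg : LongDensity g) :
    LongDensity (conv f g) := by
  have hint := eventually_integrable_mul_comp_sub hf.1.integrable_s12 hg.1.integrable_s12 hf.1.1 hg.1.1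
    (hf.2.isBoundedUnder_le hf.1.integrable_s12) (hg.2.isBoundedUnder_le hg.1.integrable_s12)
  have hpos := eventually_conv_pos hf.2.1 hf.1.1 hg.1.1 (by rw [hg.1.2]; exact one_pos) hint
  refine ⟨isDensity_conv hf.1 hg.1, hpos, tendsto_shift_div_of_nonneg fun a ha => ?_⟩
  exact tendsto_div_of_abs_sub_le hpos fun ε hε =>
    eventually_abs_conv_add_sub_le hf.1.1 hg.1.1 hf.2 hg.2 hint ha hε

theorem stmt12_general (f : ℝ → ℝ) (hf : LongDensity f) :
    ∀ n : ℕ, LongDensity (fconvPow f n) := by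
  intro n
  induction n with
  | zero => exact hf
  | succ n ih => exact longDensity_conv hf ih

theorem stmt12 (f : ℝ → ℝ) (hf0 : ∀ x < (0:ℝ), f x = 0) (hf : LongDensity f) :
    ∀ n : ℕ, LongDensity (fconvPow f n) :=
  stmt12_general f hf
end
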